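/- arXiv:2303.06483 — 9 statements merged into one kernel-verified Lean document; each statement's English description precedes it below -/
import Mathlib

section
/- Let G be a simple graph with chromatic number χ(G) ≥ 3. Then G contains an immersion of the complete tripartite graph K_{1, 1, χ(G) − 2}. -/
/-- A simple graph `G` contains an *immersion* of a graph `H` if there is an injection
`f : V(H) → V(G)` and a family of pairwise edge-disjoint paths in `G`, one path for each
edge of `H`, the path corresponding to the edge `uv` having endpoints `f u` and `f v`. -/
def Immersion {V : Type*} {W : Type*} (G : SimpleGraph V) (H : SimpleGraph W) : Prop :=
  ∃ f : W → V, Function.Injective f ∧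
    ∃ P : ∀ u v : W, H.Adj u v → G.Walk (f u) (f v),
      (∀ u v (h : H.Adj u v), (P u v h).IsPath) ∧
      ∀ u v u' v' (h : H.Adj u v) (h' : H.Adj u' v'),
        s(u, v) ≠ s(u', v') → List.Disjoint (P u v h).edges (P u' v' h').edges

/-!
Pass to an edge-critical subgraph: `H ≤ G` and an edge `vw` of `G` such that `H` has a
colouring `c` with the `χ(G) - 1` colours `Option (Fin (χ(G) - 2))` but `H + vw` has none.
Then `c v = c w`, and after renaming colours both equal `none`. For each other colour `some i`
the Kempe chain of colours `{none, some i}` through `v` also contains `w`, since otherwise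
swapping the two colours on it would colour `H + vw`. A path in this chain from `v` to `w`
starts with an edge `v tᵢ` and continues with a path `Qᵢ` from `tᵢ` to `w` avoiding `v`.
The immersion uses the edge `vw`, the edges `v tᵢ` and the paths `Qᵢ`; these are
edge-disjoint because every edge of `Qᵢ` joins the colour classes `none` and `some i`, so
labelling `v` by its own branch vertex and every other vertex `x` by the branch vertex of
colour `c x` sends each path onto the edge of `K_{1,1,χ(G)-2}` it represents.
-/

open SimpleGraph

theorem Immersion.of_leftInverse {V W : Type*} {G : SimpleGraph V} {H : SimpleGraph W}
    {f : W → V} {g : V → W} (hgf : Function.LeftInverse g f) {r : W → W → Prop}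
    (hr : ∀ u v, H.Adj u v → r u v ∨ r v u)
    (hpath : ∀ u v, r u v →
      ∃ p : G.Walk (f u) (f v), p.IsPath ∧ ∀ e ∈ p.edges, e.map g = s(u, v)) :
    Immersion G H := by
  have hadj : ∀ u v, H.Adj u v →
      ∃ p : G.Walk (f u) (f v), p.IsPath ∧ ∀ e ∈ p.edges, e.map g = s(u, v) := by
    intro u v huv
    rcases hr u v huv with h | h
    · exact hpath u v h
    · obtain ⟨p, hp, hpg⟩ := hpath v u h
      exact ⟨p.reverse, hp.reverse, fun e he => Sym2.eq_swap ▸ hpg e (by simpa using he)⟩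
  choose p hp hpg using hadj
  refine ⟨f, hgf.injective, p, hp, fun u v u' v' h h' hne e he he' => hne ?_⟩
  rw [← hpg u v h e he, hpg u' v' h' e he']

theorem Sym2.mk_eq_of_swap_apply_eq {α : Type*} [DecidableEq α] {a b p q : α}
    (h : Equiv.swap a b p = q) (hpq : p ≠ q) : s(p, q) = s(a, b) := by
  rw [Equiv.swap_apply_def] at h
  split_ifs at h <;> simp_all [Sym2.eq_swap]

namespace SimpleGraph

variable {V α : Type*} {G : SimpleGraph V}

def kempeGraph (G : SimpleGraph V) (c : V → α) (a b : α) : SimpleGraph V :=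
  G ⊓ fromEdgeSet {e | e.map c = s(a, b)}

theorem kempeGraph_adj {c : V → α} {a b : α} {x y : V} :
    (G.kempeGraph c a b).Adj x y ↔ G.Adj x y ∧ s(c x, c y) = s(a, b) := by
  simp only [kempeGraph, inf_adj, fromEdgeSet_adj, Set.mem_ofPred_eq, Sym2.map_mk]
  exact ⟨fun h => ⟨h.1, h.2.1⟩, fun h => ⟨h.1, h.2, h.1.ne⟩⟩

theorem kempeGraph_le (c : V → α) (a b : α) : G.kempeGraph c a b ≤ G := inf_le_left

theorem map_eq_of_mem_edges_kempeGraph {c : V → α} {a b : α} {x y : V}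
    (p : (G.kempeGraph c a b).Walk x y) {e : Sym2 V} (he : e ∈ p.edges) : e.map c = s(a, b) := by
  induction e using Sym2.ind
  exact (kempeGraph_adj.1 (p.adj_of_mem_edges he)).2

def Coloring.supEdge (c : G.Coloring α) {v w : V} (h : c v ≠ c w) :
    (G ⊔ edge v w).Coloring α :=
  Coloring.mk c fun {x y} hxy => by
    rcases hxy with hxy | hxy
    · exact c.valid hxy
    · rcases ((edge_adj ..).1 hxy).1 with ⟨rfl, rfl⟩ | ⟨rfl, rfl⟩
      exacts [h, h.symm]

theorem exists_le_isEmpty_coloring_sup_edge [Finite V] [Nonempty α]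
    (hG : IsEmpty (G.Coloring α)) :
    ∃ H ≤ G, ∃ v w, G.Adj v w ∧ Nonempty (H.Coloring α) ∧ IsEmpty ((H ⊔ edge v w).Coloring α) := by
  obtain ⟨M, hMG, hM⟩ := exists_minimal_le_of_wellFoundedLT (fun H => IsEmpty (H.Coloring α)) G hG
  obtain ⟨v, w, hvw⟩ : ∃ v w, M.Adj v w := by
    by_contra! h
    exact hM.prop.false (Coloring.mk (fun _ => Classical.arbitrary α) fun hxy => (h _ _ hxy).elim)
  have hle : edge v w ≤ M := (edge_le_iff _).2 (Or.inr hvw)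
  have hne : edge v w ≠ ⊥ := fun h => by
    simpa [h] using (edge_adj v w v w).2 ⟨Or.inl ⟨rfl, rfl⟩, hvw.ne⟩
  refine ⟨M \ edge v w, sdiff_le.trans hMG, v, w, hMG hvw, ?_, ?_⟩
  · exact not_isEmpty_iff.1 (hM.not_prop_of_lt (sdiff_lt hle hne))
  · rw [sdiff_sup_cancel hle]; exact hM.prop


section KempeSwap

variable [DecidableEq α]

open Classical in
noncomputable def Coloring.kempeSwap (c : G.Coloring α) (a b : α) (v : V) : G.Coloring α :=
  Coloring.mk
    (fun x => if (G.kempeGraph c a b).Reachable v x then Equiv.swap a b (c x) else c x)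
    fun {x y} hxy => by
      have cross : ∀ {x y}, G.Adj x y → (G.kempeGraph c a b).Reachable v x →
          ¬ (G.kempeGraph c a b).Reachable v y → Equiv.swap a b (c x) ≠ c y :=
        fun hxy hx hy heq => hy <| hx.trans <| Adj.reachable <|
          kempeGraph_adj.2 ⟨hxy, Sym2.mk_eq_of_swap_apply_eq heq (c.valid hxy)⟩
      by_cases hx : (G.kempeGraph c a b).Reachable v x <;>
        by_cases hy : (G.kempeGraph c a b).Reachable v y <;> simp only [hx, hy, if_true, if_false]
      · exact (Equiv.injective _).ne (c.valid hxy)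
      · exact cross hxy hx hy
      · exact (cross hxy.symm hy hx).symm
      · exact c.valid hxy

theorem Coloring.kempeSwap_apply_of_reachable (c : G.Coloring α) {a b : α} {v x : V}
    (h : (G.kempeGraph c a b).Reachable v x) : c.kempeSwap a b v x = Equiv.swap a b (c x) :=
  if_pos h

theorem Coloring.kempeSwap_apply_of_not_reachable (c : G.Coloring α) {a b : α} {v x : V}
    (h : ¬ (G.kempeGraph c a b).Reachable v x) : c.kempeSwap a b v x = c x :=
  if_neg h

theorem reachable_kempeGraph_of_isEmpty_coloring_sup_edge (c : G.Coloring α) {v w : V}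
    (hvw : c v = c w) {a : α} (ha : a ≠ c v) (h : IsEmpty ((G ⊔ edge v w).Coloring α)) :
    (G.kempeGraph c (c v) a).Reachable v w := by
  by_contra hw
  have hv : (c.kempeSwap (c v) a v) v = a := by
    rw [c.kempeSwap_apply_of_reachable Reachable.rfl, Equiv.swap_apply_left]
  have hw : (c.kempeSwap (c v) a v) w = c v := by
    rw [c.kempeSwap_apply_of_not_reachable hw, hvw]
  exact h.false ((c.kempeSwap (c v) a v).supEdge (by rw [hv, hw]; exact ha))

end KempeSwap

theorem Reachable.exists_adj_isPath_not_mem_support {v w : V} (h : G.Reachable v w)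
    (hne : v ≠ w) : ∃ t, G.Adj v t ∧ ∃ q : G.Walk t w, q.IsPath ∧ v ∉ q.support := by
  obtain ⟨p, hp⟩ := h.exists_isPath
  cases p with
  | nil => exact absurd rfl hne
  | cons hadj q => exact ⟨_, hadj, q, (Walk.cons_isPath_iff _ _).1 hp⟩

theorem immersion_completeTripartite_of_bicoloured_paths {ι : Type} (c : V → Option ι) {v w : V}
    (t : ι → V) (hvw : G.Adj v w) (hvt : ∀ i, G.Adj v (t i)) (hw : c w = none)
    (ht : ∀ i, c (t i) = some i) (q : ∀ i, G.Walk (t i) w) (hq : ∀ i, (q i).IsPath)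
    (hqv : ∀ i, v ∉ (q i).support) (hqc : ∀ i, ∀ e ∈ (q i).edges, e.map c = s(none, some i)) :
    Immersion G (completeMultipartiteGraph ![Fin 1, Fin 1, ι]) := by
  classical
  let f : (Σ j, ![Fin 1, Fin 1, ι] j) → V
    | ⟨0, _⟩ => v
    | ⟨1, _⟩ => w
    | ⟨2, i⟩ => t i
  let label : Option ι → Σ j, ![Fin 1, Fin 1, ι] j := fun o => o.elim ⟨1, (0 : Fin 1)⟩ (⟨2, ·⟩)
  let g : V → Σ j, ![Fin 1, Fin 1, ι] j := fun x => if x = v then ⟨0, (0 : Fin 1)⟩ else label (c x)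
  have hgw : g w = ⟨1, (0 : Fin 1)⟩ := by simp [g, hvw.ne.symm, hw, label]
  have hgt : ∀ i, g (t i) = ⟨2, i⟩ := fun i => by simp [g, (hvt i).ne.symm, ht, label]
  have hgv : g v = ⟨0, (0 : Fin 1)⟩ := if_pos rfl
  have hg_toWalk : ∀ {x y} (h : G.Adj x y), ∀ e ∈ h.toWalk.edges, e.map g = s(g x, g y) :=
    fun _ e he => by rw [List.mem_singleton.1 he]; rfl
  have hgf : Function.LeftInverse g f
    | ⟨0, x⟩ => by obtain rfl : x = (0 : Fin 1) := Fin.fin_one_eq_zero x; exact hgv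
    | ⟨1, x⟩ => by obtain rfl : x = (0 : Fin 1) := Fin.fin_one_eq_zero x; exact hgw
    | ⟨2, i⟩ => hgt i
  have hgq : ∀ i, ∀ e ∈ (q i).edges, e.map g = s(⟨1, (0 : Fin 1)⟩, ⟨2, i⟩) := by
    intro i e he
    have hgc : ∀ x ∈ e, g x = label (c x) := by
      induction e using Sym2.ind
      intro x hx
      rcases Sym2.mem_iff.1 hx with rfl | rfl
      exacts [if_neg (ne_of_mem_of_not_mem ((q i).fst_mem_support_of_mem_edges he) (hqv i)),
        if_neg (ne_of_mem_of_not_mem ((q i).snd_mem_support_of_mem_edges he) (hqv i))]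
    calc e.map g = (e.map c).map label := by rw [Sym2.map_map]; exact Sym2.map_congr hgc
      _ = _ := by rw [hqc i e he]; rfl
  have hpath : ∀ a b, a.1 < b.1 →
      ∃ p : G.Walk (f a) (f b), p.IsPath ∧ ∀ e ∈ p.edges, e.map g = s(a, b)
    | ⟨0, x⟩, ⟨1, y⟩, _ => by
      obtain rfl : x = (0 : Fin 1) := Fin.fin_one_eq_zero x
      obtain rfl : y = (0 : Fin 1) := Fin.fin_one_eq_zero y
      exact ⟨hvw.toWalk, .of_adj hvw,
        fun e he => (hg_toWalk hvw e he).trans (congrArg₂ _ hgv hgw)⟩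
    | ⟨0, x⟩, ⟨2, i⟩, _ => by
      obtain rfl : x = (0 : Fin 1) := Fin.fin_one_eq_zero x
      exact ⟨(hvt i).toWalk, .of_adj (hvt i),
        fun e he => (hg_toWalk (hvt i) e he).trans (congrArg₂ _ hgv (hgt i))⟩
    | ⟨1, x⟩, ⟨2, i⟩, _ => by
      obtain rfl : x = (0 : Fin 1) := Fin.fin_one_eq_zero x
      exact ⟨(q i).reverse, (hq i).reverse, fun e he => hgq i e (by simpa using he)⟩
    | ⟨0, _⟩, ⟨0, _⟩, h | ⟨1, _⟩, ⟨0, _⟩, h | ⟨1, _⟩, ⟨1, _⟩, h | ⟨2, _⟩, ⟨0, _⟩, h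
    | ⟨2, _⟩, ⟨1, _⟩, h | ⟨2, _⟩, ⟨2, _⟩, h => by simp at h
  exact Immersion.of_leftInverse hgf (fun a b hab => lt_or_gt_of_ne hab) hpath

end SimpleGraph

/-- Every graph with chromatic number at least 3 contains an immersion of the complete
tripartite graph `K_{1, 1, χ(G) - 2}`. -/
theorem statement_2 {V : Type*} [Fintype V] (G : SimpleGraph V) (k : ℕ)
    (hχ : G.chromaticNumber = k) (hk : 3 ≤ k) :
    Immersion G (SimpleGraph.completeMultipartiteGraph ![Fin 1, Fin 1, Fin (k - 2)]) := by
  classical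
  have hG : IsEmpty (G.Coloring (Option (Fin (k - 2)))) := by
    refine ⟨fun c => ?_⟩
    have := hχ ▸ c.colorable.chromaticNumber_le
    simp only [Fintype.card_option, Fintype.card_fin, Nat.cast_le] at this
    omega
  obtain ⟨H, hHG, v, w, hvw, ⟨c₀⟩, hH⟩ := exists_le_isEmpty_coloring_sup_edge hG
  set c := H.recolorOfEquiv (Equiv.swap (c₀ v) none) c₀
  have hcv : c v = none := Equiv.swap_apply_left _ _
  have hcw : c w = none := by
    by_contra hcw
    exact hH.false (c.supEdge (hcv ▸ Ne.symm hcw))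
  have hK : ∀ i, (H.kempeGraph c none (some i)).Reachable v w := fun i =>
    hcv ▸ reachable_kempeGraph_of_isEmpty_coloring_sup_edge c (hcv.trans hcw.symm)
      (by simp [hcv]) hH
  choose t hvt q hq hqv using fun i => (hK i).exists_adj_isPath_not_mem_support hvw.ne
  have hKG : ∀ i, H.kempeGraph c none (some i) ≤ G := fun i => (kempeGraph_le _ _ _).trans hHG
  refine immersion_completeTripartite_of_bicoloured_paths c t hvw (fun i => hKG i (hvt i)) hcw
    (fun i => ?_) (fun i => (q i).mapLe (hKG i)) (fun i => (hq i).mapLe _)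
    (fun i => by rw [Walk.support_mapLe_eq_support]; exact hqv i)
    (fun i e he => map_eq_of_mem_edges_kempeGraph (q i) (Walk.edges_mapLe_eq_edges _ _ ▸ he))
  have := (kempeGraph_adj.1 (hvt i)).2
  rwa [hcv, Sym2.congr_right] at this
end

section
/- Let j ≤ k be positive integers, let C_1, …, C_j be subsets of {1, …, n}, each of size k, and let A be a set of size k disjoint from {1, …, n}. Then there are pairwise disjoint matchings M_1, …, M_j in the complete bipartite graph with parts A and {1, …, n} such that, for every i ∈ {1, …, j}, the matching M_i matches A with C_i (i.e., M_i is a perfect matching between A and C_i). Equivalently, there exist bijections σ_i : A → C_i for i ∈ {1, …, j} such that for all i ≠ i′ and all a ∈ A, σ_i(a) ≠ σ_{i′}(a). -/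
/-!
This is König's edge-colouring theorem for the bipartite incidence graph between the indices `i`
and the elements of the sets `C i`: every index has degree `k`, and every element has degree
(its load, the number of sets containing it) at most `j ≤ k`. Peel off one matching that saturates
every index and every element of maximal load, and induct on the maximal load. Such a matching
comes from Hall's theorem once dummy indices, adjacent to the elements of non-maximal load, are
added until both sides have the same size: Hall's condition is a double count, and the resulting
injection is a bijection, so the elements of maximal load are hit by genuine indices.
-/

open Finset

namespace Finset

variable {ι α : Type*} [Fintype ι] [DecidableEq α] {R : ι → Finset α} {d : ℕ}

theorem card_le_card_biUnion_of_le_card_of_load_le (hd : 0 < d) (hR : ∀ i, d ≤ #(R i))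
    (hload : ∀ x, #{i | x ∈ R i} ≤ d) (S : Finset ι) : #S ≤ #(S.biUnion R) := by
  refine Nat.le_of_mul_le_mul_right (card_mul_le_card_mul (fun i x ↦ x ∈ R i) (fun i hi ↦ ?_)
    (fun x _ ↦ (card_le_card (filter_subset_filter _ (subset_univ S))).trans (hload x))) hd
  rw [bipartiteAbove, filter_mem_eq_inter, inter_eq_right.2 (subset_biUnion_of_mem R hi)]
  exact hR i

theorem card_sdiff_biUnion_add_card_le (hd : 0 < d) (hR : ∀ i, #(R i) ≤ d) {T : Finset α}
    (hT : ∀ x ∈ T, #{i | x ∈ R i} = d) (S : Finset ι) :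
    #(T \ S.biUnion R) + #S ≤ Fintype.card ι := by
  classical
  have hrest : #(T \ S.biUnion R) * d ≤ #Sᶜ * d := by
    refine card_mul_le_card_mul (fun x i ↦ x ∈ R i) (fun x hx ↦ ?_)
      (fun i _ ↦ (card_le_card fun x hx ↦ (mem_filter.1 hx).2).trans (hR i))
    obtain ⟨hxT, hxS⟩ := mem_sdiff.1 hx
    rw [← hT x hxT]
    refine card_le_card fun i hi ↦ mem_filter.2 ⟨mem_compl.2 fun hiS ↦ hxS ?_, (mem_filter.1 hi).2⟩
    exact mem_biUnion.2 ⟨i, hiS, (mem_filter.1 hi).2⟩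
  rw [← card_compl_add_card S]
  exact Nat.add_le_add_right (Nat.le_of_mul_le_mul_right hrest hd) _

theorem exists_injective_mem_and_mem_range_of_load_eq (hd : 0 < d) [Fintype α] [DecidableEq ι]
    (hR : ∀ i, #(R i) = d) (hload : ∀ x, #{i | x ∈ R i} ≤ d) :
    ∃ f : ι → α, Function.Injective f ∧ (∀ i, f i ∈ R i) ∧
      ∀ x, #{i | x ∈ R i} = d → x ∈ Set.range f := by
  set T : Finset α := {x | #{i | x ∈ R i} = d}
  have hHall := card_le_card_biUnion_of_le_card_of_load_le hd (fun i ↦ (hR i).ge) hload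
  have hcard : Fintype.card ι ≤ Fintype.card α := by
    simpa using (hHall univ).trans (card_le_univ _)
  let G : ι ⊕ Fin (Fintype.card α - Fintype.card ι) → Finset α := Sum.elim R fun _ ↦ Tᶜ
  have hall : ∀ S, #S ≤ #(S.biUnion G) := by
    intro S
    rw [← card_toLeft_add_card_toRight]
    have hleft : S.toLeft.biUnion R ⊆ S.biUnion G := fun x hx ↦ by
      obtain ⟨i, hi, hx⟩ := mem_biUnion.1 hx
      exact mem_biUnion.2 ⟨.inl i, mem_toLeft.1 hi, hx⟩
    rcases S.toRight.eq_empty_or_nonempty with hS | ⟨z, hz⟩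
    · rw [hS, card_empty, add_zero]
      exact (hHall _).trans (card_le_card hleft)
    · have hdummy : Tᶜ ⊆ S.biUnion G := fun x hx ↦ mem_biUnion.2 ⟨.inr z, mem_toRight.1 hz, hx⟩
      have hcompl : (Tᶜ ∪ S.toLeft.biUnion R)ᶜ = T \ S.toLeft.biUnion R := by
        rw [compl_union, compl_compl, sdiff_eq_inter_compl]
      have hmissed := card_sdiff_biUnion_add_card_le hd (fun i ↦ (hR i).le)
        (T := T) (fun x hx ↦ (mem_filter.1 hx).2) S.toLeft
      have hsplit := card_compl_add_card (Tᶜ ∪ S.toLeft.biUnion R)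
      have hright := card_le_univ S.toRight
      have hunion := card_le_card (union_subset hdummy hleft)
      rw [hcompl] at hsplit
      simp only [Fintype.card_fin] at hright
      omega
  obtain ⟨g, hg, hgG⟩ := (all_card_le_biUnion_card_iff_exists_injective G).1 hall
  have hgbij : Function.Bijective g :=
    (Fintype.bijective_iff_injective_and_card g).2
      ⟨hg, by simp only [Fintype.card_sum, Fintype.card_fin]; omega⟩
  refine ⟨g ∘ .inl, hg.comp Sum.inl_injective, fun i ↦ hgG (.inl i), fun x hx ↦ ?_⟩
  obtain ⟨i | z, rfl⟩ := hgbij.2 x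
  · exact ⟨i, rfl⟩
  · exact absurd hx (by simpa [G, T] using hgG (.inr z))

theorem exists_pairwise_ne_injective_mem [Fintype α] [DecidableEq ι] (hR : ∀ i, #(R i) = d)
    (hload : ∀ x, #{i | x ∈ R i} ≤ d) :
    ∃ σ : ι → Fin d → α, (∀ i, Function.Injective (σ i)) ∧ (∀ i a, σ i a ∈ R i) ∧
      ∀ i i', i ≠ i' → ∀ a, σ i a ≠ σ i' a := by
  induction d generalizing R with
  | zero => exact ⟨fun _ ↦ Fin.elim0, fun _ ↦ Function.injective_of_subsingleton _,
      fun _ a ↦ a.elim0, fun _ _ _ a ↦ a.elim0⟩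
  | succ d ih =>
    obtain ⟨f, hf, hfR, hcover⟩ :=
      exists_injective_mem_and_mem_range_of_load_eq d.succ_pos hR hload
    set R' : ι → Finset α := fun i ↦ (R i).erase (f i)
    have hR' : ∀ i, #(R' i) = d := fun i ↦ by simp [R', card_erase_of_mem (hfR i), hR]
    have hload' : ∀ x, #{i | x ∈ R' i} ≤ d := by
      intro x
      rcases (hload x).lt_or_eq with hlt | heq
      · exact (card_le_card (monotone_filter_right _ fun _ _ ↦ mem_of_mem_erase)).trans
          (Nat.lt_succ_iff.1 hlt)
      · obtain ⟨i₀, rfl⟩ := hcover _ heq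
        have hsub : ({i | f i₀ ∈ R' i} : Finset ι) ⊆ ({i | f i₀ ∈ R i} : Finset ι).erase i₀ :=
          fun i hi ↦ by
            simp only [R', mem_filter, mem_univ, true_and, mem_erase] at hi ⊢
            exact ⟨fun h ↦ hi.1 (h ▸ rfl), hi.2⟩
        simpa [card_erase_of_mem, heq, hfR] using card_le_card hsub
    obtain ⟨σ, hσ, hσR, hσne⟩ := ih hR' hload'
    refine ⟨fun i ↦ Fin.cons (f i) (σ i), fun i ↦ Fin.cons_injective_iff.2 ⟨?_, hσ i⟩, ?_, ?_⟩
    · rintro ⟨a, ha⟩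
      exact (mem_erase.1 (hσR i a)).1 ha
    · intro i a
      cases a using Fin.cases with
      | zero => exact hfR i
      | succ a => exact mem_of_mem_erase (hσR i a)
    · intro i i' hii' a
      cases a using Fin.cases with
      | zero => exact hf.ne hii'
      | succ a => exact hσne i i' hii' a

end Finset

theorem statement_4_general (j k n : ℕ) (hjk : j ≤ k)
    (C : Fin j → Finset (Fin n)) (hC : ∀ i, (C i).card = k) :
    ∃ σ : Fin j → Fin k → Fin n,
      (∀ i, Function.Injective (σ i)) ∧
      (∀ i a, σ i a ∈ C i) ∧
      (∀ i i' : Fin j, i ≠ i' → ∀ a : Fin k, σ i a ≠ σ i' a) :=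
  exists_pairwise_ne_injective_mem hC fun _ ↦ (card_le_univ _).trans (by simpa using hjk)

/-- **Matching lemma.** Let `j ≤ k` be positive integers and `C 1, …, C j ⊆ [n]` be sets of
size `k`. Then, viewing an abstract `k`-set `A` as `Fin k`, there are pairwise disjoint
perfect matchings between `A` and each `C i`; equivalently, there are bijections
`σ i : Fin k → C i` that pairwise disagree everywhere. -/
theorem statement_4 (j k n : ℕ) (hj : 1 ≤ j) (hjk : j ≤ k)
    (C : Fin j → Finset (Fin n)) (hC : ∀ i, (C i).card = k) :
    ∃ σ : Fin j → Fin k → Fin n,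
      (∀ i, Function.Injective (σ i)) ∧
      (∀ i a, σ i a ∈ C i) ∧
      (∀ i i' : Fin j, i ≠ i' → ∀ a : Fin k, σ i a ≠ σ i' a) :=
  statement_4_general j k n hjk C hC
end

section
/- Let k be a positive integer, let G be the complete graph on 2k vertices, and let (A_1, B_1), …, (A_k, B_k) be pairs of sets of vertices of G such that for every i ∈ {1, …, k}: (a) k ≥ |A_i| = |B_i| ≥ 2(i − 1), and (b) A_i ∩ B_i = ∅. Then G contains pairwise edge-disjoint matchings M_1, …, M_k such that, for every i, the matching M_i is a perfect matching between A_i and B_i (every edge of M_i has one endpoint in A_i and the other in B_i, and M_i saturates A_i and B_i). -/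
/-!
The matchings are chosen greedily, `M_1` first. When `M_i` is chosen, the earlier `i - 1`
matchings meet each vertex in at most `i - 1` edges, so in the bipartite graph of still unused
edges between `A_i` and `B_i` every vertex misses at most `i - 1 ≤ |A_i| / 2` vertices of the
other side. Such a balanced bipartite graph has a perfect matching by Hall's theorem: a set
`S ⊆ A_i` of size at most `|A_i| - (i - 1)` is covered by the neighbourhood of any of its
vertices, and a larger `S` exceeds `i - 1` and hence meets the neighbourhood of every vertex
of `B_i`.
-/

open Finset

open Classical in
theorem Finset.card_filter_exists_le_of_subsingleton {ι α : Type*} (J : Finset ι) (T : Finset α)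
    (P : ι → α → Prop) (hP : ∀ j ∈ J, {x | P j x}.Subsingleton) :
    #{x ∈ T | ∃ j ∈ J, P j x} ≤ #J := by
  calc #{x ∈ T | ∃ j ∈ J, P j x}
      ≤ #(J.biUnion fun j => {x ∈ T | P j x}) := by
        refine card_le_card fun x hx => ?_
        obtain ⟨hxT, j, hj, hjx⟩ := mem_filter.1 hx
        exact mem_biUnion.2 ⟨j, hj, mem_filter.2 ⟨hxT, hjx⟩⟩
    _ ≤ #J * 1 := card_biUnion_le_card_mul _ _ _ fun j hj =>
        card_le_one.2 fun x hx y hy => hP j hj (mem_filter.1 hx).2 (mem_filter.1 hy).2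
    _ = #J := mul_one _

open Classical in
theorem Finset.exists_equiv_forall_rel_of_card_filter_not_le {α β : Type*}
    {A : Finset α} {B : Finset β} (r : α → β → Prop) {d : ℕ} (hcard : #A = #B)
    (hd : 2 * d ≤ #A) (hA : ∀ a ∈ A, #{b ∈ B | ¬r a b} ≤ d)
    (hB : ∀ b ∈ B, #{a ∈ A | ¬r a b} ≤ d) :
    ∃ e : A ≃ B, ∀ a : A, r a (e a) := by
  set t : A → Finset β := fun a => {b ∈ B | r a b}
  have hall : ∀ S : Finset A, #S ≤ #(S.biUnion t) := by
    intro S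
    by_cases hS : #S ≤ #A - d
    · obtain rfl | ⟨a, ha⟩ := S.eq_empty_or_nonempty
      · simp
      have hta : #(t a) + #{b ∈ B | ¬r a b} = #B := card_filter_add_card_filter_not _
      have := hA a a.2
      calc #S ≤ #(t a) := by omega
        _ ≤ #(S.biUnion t) := card_le_card (subset_biUnion_of_mem t ha)
    · have hBS : B ⊆ S.biUnion t := by
        intro b hb
        by_contra hbS
        have hsub : S.map (Function.Embedding.subtype _) ⊆ {a ∈ A | ¬r a b} := by
          intro a ha
          obtain ⟨a, haS, rfl⟩ := mem_map.1 ha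
          exact mem_filter.2
            ⟨a.2, fun hab => hbS (mem_biUnion.2 ⟨a, haS, mem_filter.2 ⟨hb, hab⟩⟩)⟩
        have := (card_le_card hsub).trans (hB b hb)
        rw [card_map] at this
        omega
      calc #S ≤ #A := by simpa using card_le_univ S
        _ = #B := hcard
        _ ≤ #(S.biUnion t) := card_le_card hBS
  obtain ⟨f, hf, hft⟩ := (all_card_le_biUnion_card_iff_exists_injective t).1 hall
  let g : A → B := fun a => ⟨f a, (mem_filter.1 (hft a)).1⟩
  have hg : Function.Bijective g :=
    (Fintype.bijective_iff_injective_and_card g).2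
      ⟨fun a a' h => hf (congrArg Subtype.val h), by simp [hcard]⟩
  exact ⟨Equiv.ofBijective g hg, fun a => (mem_filter.1 (hft a)).2⟩

theorem Equiv.bijOn_extendSubtype {V : Type*} [DecidableEq V] {A B : Finset V} (e : A ≃ B) :
    Set.BijOn e.extendSubtype A B := by
  refine ⟨fun x hx => e.extendSubtype_mem x hx, e.extendSubtype.injective.injOn, fun b hb => ?_⟩
  refine ⟨e.symm ⟨b, hb⟩, (e.symm ⟨b, hb⟩).2, ?_⟩
  rw [e.extendSubtype_apply_of_mem _ (e.symm ⟨b, hb⟩).2]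
  simp

section Matchings

variable {V : Type*}

def matchingEdges (A : Finset V) (σ : V → V) : Set (Sym2 V) :=
  (fun a => s(a, σ a)) '' A

theorem mem_matchingEdges {A : Finset V} {σ : V → V} {v w : V} :
    s(v, w) ∈ matchingEdges A σ ↔ v ∈ A ∧ σ v = w ∨ w ∈ A ∧ σ w = v := by
  simp only [matchingEdges, Set.mem_image, mem_coe, Sym2.eq_iff]
  grind

theorem subsingleton_setOf_mem_matchingEdges {A B : Finset V} {σ : V → V}
    (hσ : Set.BijOn σ A B) (hAB : Disjoint A B) (v : V) :
    {w | s(v, w) ∈ matchingEdges A σ}.Subsingleton := by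
  have hvB : v ∈ A → ∀ a ∈ A, σ a ≠ v := fun hv a ha hav =>
    disjoint_left.1 hAB hv (hav ▸ hσ.mapsTo ha)
  rintro w₁ hw₁ w₂ hw₂
  rcases mem_matchingEdges.1 hw₁ with ⟨hv, rfl⟩ | ⟨hw₁A, hw₁⟩ <;>
    rcases mem_matchingEdges.1 hw₂ with ⟨hv', rfl⟩ | ⟨hw₂A, hw₂⟩
  · rfl
  · exact absurd hw₂ (hvB hv _ hw₂A)
  · exact absurd hw₁ (hvB hv' _ hw₁A)
  · exact hσ.injOn hw₁A hw₂A (hw₁.trans hw₂.symm)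

theorem exists_bijOn_disjoint_matchingEdges {ι : Type*} (s : Finset ι) {A B : ι → Finset V}
    {σ : ι → V → V} (hσ : ∀ j ∈ s, Set.BijOn (σ j) (A j) (B j))
    (hAB : ∀ j ∈ s, Disjoint (A j) (B j)) {A₀ B₀ : Finset V} (hcard : #A₀ = #B₀)
    (hs : 2 * #s ≤ #A₀) :
    ∃ τ : V → V, Set.BijOn τ A₀ B₀ ∧
      ∀ j ∈ s, Disjoint (matchingEdges A₀ τ) (matchingEdges (A j) (σ j)) := by
  classical
  have hpartners (v : V) (T : Finset V) :
      #{w ∈ T | ∃ j ∈ s, s(v, w) ∈ matchingEdges (A j) (σ j)} ≤ #s :=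
    card_filter_exists_le_of_subsingleton _ _ _ fun j hj =>
      subsingleton_setOf_mem_matchingEdges (hσ j hj) (hAB j hj) v
  obtain ⟨e, he⟩ := exists_equiv_forall_rel_of_card_filter_not_le
    (fun a b => ∀ j ∈ s, s(a, b) ∉ matchingEdges (A j) (σ j)) hcard hs
    (fun a _ => by simpa using hpartners a B₀)
    (fun b _ => by simpa [Sym2.eq_swap] using hpartners b A₀)
  refine ⟨e.extendSubtype, e.bijOn_extendSubtype, fun j hj => ?_⟩
  rw [Set.disjoint_left]
  rintro _ ⟨a, ha, rfl⟩
  show s(a, e.extendSubtype a) ∉ _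
  rw [e.extendSubtype_apply_of_mem a ha]
  exact he ⟨a, ha⟩ j hj

theorem exists_bijOn_pairwise_disjoint_matchingEdges {ι : Type*} [LinearOrder ι]
    [LocallyFiniteOrderBot ι] (s : Finset ι) {A B : ι → Finset V}
    (hcard : ∀ i, #(A i) = #(B i)) (hlower : ∀ i, 2 * #(Iio i) ≤ #(A i))
    (hAB : ∀ i, Disjoint (A i) (B i)) :
    ∃ σ : ι → V → V, (∀ i ∈ s, Set.BijOn (σ i) (A i) (B i)) ∧
      (s : Set ι).PairwiseDisjoint fun i => matchingEdges (A i) (σ i) := by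
  classical
  induction s using Finset.induction_on_max with
  | empty => exact ⟨fun _ => id, by simp, by simp⟩
  | insert i s hlt ih =>
    obtain ⟨σ, hσ, hdisj⟩ := ih
    have hs : #s ≤ #(Iio i) := card_le_card fun j hj => mem_Iio.2 (hlt j hj)
    obtain ⟨τ, hτ, hτdisj⟩ := exists_bijOn_disjoint_matchingEdges s hσ (fun j _ => hAB j)
      (hcard i) ((Nat.mul_le_mul_left 2 hs).trans (hlower i))
    have hupd : ∀ j ∈ s, Function.update σ i τ j = σ j := fun j hj =>
      Function.update_of_ne (hlt j hj).ne _ _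
    refine ⟨Function.update σ i τ, fun j hj => ?_, ?_⟩
    · rcases mem_insert.1 hj with rfl | hj
      · simpa using hτ
      · simpa [hupd j hj] using hσ j hj
    · rw [coe_insert]
      refine Set.PairwiseDisjoint.insert_of_notMem (fun j hj j' hj' hne => ?_)
        (fun hi => lt_irrefl i (hlt i hi)) fun j hj => ?_
      · simpa [Function.onFun, hupd j hj, hupd j' hj'] using hdisj hj hj' hne
      · simpa [hupd j hj] using hτdisj j hj

end Matchings

theorem statement_5_general (k : ℕ) (A B : Fin k → Finset (Fin (2 * k)))
    (hcard : ∀ i, (A i).card = (B i).card)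
    (hlower : ∀ i : Fin k, 2 * (i : ℕ) ≤ (A i).card)
    (hdisj : ∀ i, Disjoint (A i) (B i)) :
    ∃ σ : Fin k → Fin (2 * k) → Fin (2 * k),
      (∀ i, Set.BijOn (σ i) ↑(A i) ↑(B i)) ∧
      (∀ i j : Fin k, i ≠ j → ∀ a ∈ A i, ∀ a' ∈ A j, s(a, σ i a) ≠ s(a', σ j a')) := by
  obtain ⟨σ, hσ, hσdisj⟩ := exists_bijOn_pairwise_disjoint_matchingEdges univ hcard
    (fun i => by simpa using hlower i) hdisj
  refine ⟨σ, fun i => hσ i (mem_univ i), fun i j hij a ha a' ha' hedge => ?_⟩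
  exact Set.disjoint_left.1 (hσdisj (mem_univ i) (mem_univ j) hij) ⟨a, ha, rfl⟩
    ⟨a', ha', hedge.symm⟩

/-- In the complete graph on `2k` vertices, given pairs `(A i, B i)` of disjoint vertex
sets with `k ≥ |A i| = |B i| ≥ 2 i` (for `i = 0, …, k - 1`), there are pairwise
edge-disjoint matchings `M i`, where `M i` is a perfect matching between `A i` and `B i`.
The matching `M i` is given by a bijection `σ i` from `A i` to `B i`, its edges being
`s(a, σ i a)` for `a ∈ A i`; edge-disjointness says no edge is used by two matchings. -/
theorem statement_5 (k : ℕ) (hk : 1 ≤ k) (A B : Fin k → Finset (Fin (2 * k)))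
    (hcard : ∀ i, (A i).card = (B i).card)
    (hupper : ∀ i, (A i).card ≤ k)
    (hlower : ∀ i : Fin k, 2 * (i : ℕ) ≤ (A i).card)
    (hdisj : ∀ i, Disjoint (A i) (B i)) :
    ∃ σ : Fin k → Fin (2 * k) → Fin (2 * k),
      (∀ i, Set.BijOn (σ i) ↑(A i) ↑(B i)) ∧
      (∀ i j : Fin k, i ≠ j → ∀ a ∈ A i, ∀ a' ∈ A j, s(a, σ i a) ≠ s(a', σ j a')) :=
  statement_5_general k A B hcard hlower hdisj
end

section
/- Let G be a simple graph with independence number at most 2 such that deleting any edge of G produces a graph with an independent set of size 3 (i.e., G is edge-critical). Let x and y be two non-adjacent vertices of G, let C = N(x) ∩ N(y), let X = V(G) \ N[y] and Y = V(G) \ N[x]. Then for every vertex a ∈ C, neither X ⊆ N(a) nor Y ⊆ N(a); that is, some vertex of X is not adjacent to a and some vertex of Y is not adjacent to a. -/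
theorem SimpleGraph.not_compl_insert_neighborSet_subset_neighborSet {V : Type*}
    {G : SimpleGraph V}
    (hcrit : ∀ u v : V, G.Adj u v → ∃ w : V, w ≠ u ∧ w ≠ v ∧ ¬ G.Adj w u ∧ ¬ G.Adj w v)
    {a y : V} (hay : G.Adj a y) :
    ¬ Set.univ \ insert y (G.neighborSet y) ⊆ G.neighborSet a := by
  obtain ⟨w, -, hwy, hwa, hwy'⟩ := hcrit a y hay
  intro hsub
  have hw : w ∈ Set.univ \ insert y (G.neighborSet y) := by
    simp only [Set.mem_sdiff, Set.mem_univ, Set.mem_insert_iff, SimpleGraph.mem_neighborSet,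
      true_and, not_or]
    exact ⟨hwy, fun h => hwy' h.symm⟩
  exact hwa (hsub hw).symm

theorem statement_7_general {V : Type*} (G : SimpleGraph V)
    (hcrit : ∀ u v : V, G.Adj u v → ∃ w : V, w ≠ u ∧ w ≠ v ∧ ¬ G.Adj w u ∧ ¬ G.Adj w v)
    (x y : V)
    (C X Y : Set V)
    (hC : C = G.neighborSet x ∩ G.neighborSet y)
    (hX : X = Set.univ \ insert y (G.neighborSet y))
    (hY : Y = Set.univ \ insert x (G.neighborSet x))
    (a : V) (ha : a ∈ C) :
    ¬ X ⊆ G.neighborSet a ∧ ¬ Y ⊆ G.neighborSet a := by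
  subst hC hX hY
  exact ⟨G.not_compl_insert_neighborSet_subset_neighborSet hcrit ha.2.symm,
    G.not_compl_insert_neighborSet_subset_neighborSet hcrit ha.1.symm⟩

/-- In an edge-critical graph `G` with independence number at most 2, with non-adjacent
vertices `x, y`, common neighborhood `C = N(x) ∩ N(y)`, `X = V(G) \ N[y]` and
`Y = V(G) \ N[x]`: for every `a ∈ C`, neither `X ⊆ N(a)` nor `Y ⊆ N(a)`. -/
theorem statement_7 {V : Type*} [Fintype V] (G : SimpleGraph V)
    (hα : Gᶜ.CliqueFree 3)
    (hcrit : ∀ u v : V, G.Adj u v → ∃ w : V, w ≠ u ∧ w ≠ v ∧ ¬ G.Adj w u ∧ ¬ G.Adj w v)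
    (x y : V) (hxy : x ≠ y) (hnadj : ¬ G.Adj x y)
    (C X Y : Set V)
    (hC : C = G.neighborSet x ∩ G.neighborSet y)
    (hX : X = Set.univ \ insert y (G.neighborSet y))
    (hY : Y = Set.univ \ insert x (G.neighborSet x))
    (a : V) (ha : a ∈ C) :
    ¬ X ⊆ G.neighborSet a ∧ ¬ Y ⊆ G.neighborSet a :=
  statement_7_general G hcrit x y C X Y hC hX hY a ha
end

section
/- Let ℓ be a positive integer and let G be a simple graph on n vertices with independence number at most 2 such that: G is edge-critical, n ≥ 4ℓ − 1, and every pair of non-adjacent vertices of G has at most ℓ − 2 common neighbors. Let x, y be non-adjacent vertices, C = N(x) ∩ N(y), X = V(G) \ N[y], Y = V(G) \ N[x]. For a ∈ C set X_a = X ∩ N(a), X̄_a = X \ N(a), Y_a = Y ∩ N(a), Ȳ_a = Y \ N(a), and let X_C (resp. Y_C) be the set of vertices of X (resp. Y) adjacent to every vertex of C. Then for every a ∈ C: |X_C| ≤ |X_a| ≤ ℓ − 2 and |Y_C| ≤ |Y_a| ≤ ℓ − 2; moreover |X̄_a| ≥ ⌈n/2⌉ − |Y| + 3 and |Ȳ_a|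 ≥ ⌈n/2⌉ − |X| + 3. -/
/-!
The common neighbourhood `C` and the non-neighbourhoods `X`, `Y` cover the vertex set, and
`|C| ≤ ℓ - 2`. For `a ∈ C`, edge-criticality applied to the edge `ya` yields a vertex `w`
adjacent to neither `y` nor `a`; since `α(G) ≤ 2`, every vertex of `X_a` must be adjacent to
`w`, so `X_a` lies in the common neighbourhood of the non-adjacent pair `a, w` and
`|X_a| ≤ ℓ - 2`. The lower bound on `|X̄_a| = |X| - |X_a|` then follows by counting, using
`n ≥ 4ℓ - 1`.
-/

namespace SimpleGraph

variable {V : Type*} {G : SimpleGraph V}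

theorem univ_diff_insert_neighborSet (G : SimpleGraph V) (v : V) :
    Set.univ \ insert v (G.neighborSet v) = Gᶜ.neighborSet v := by
  ext w
  simp [compl_adj, eq_comm]

theorem adj_of_cliqueFree_compl (hα : Gᶜ.CliqueFree 3) {u v w : V} (huv : u ≠ v)
    (hu : ¬G.Adj u w) (hv : ¬G.Adj v w) (huw : u ≠ w) (hvw : v ≠ w) : G.Adj u v := by
  classical
  by_contra h
  exact hα {u, v, w} (is3Clique_triple_iff.mpr
    ⟨(compl_adj G u v).mpr ⟨huv, h⟩, (compl_adj G u w).mpr ⟨huw, hu⟩,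
      (compl_adj G v w).mpr ⟨hvw, hv⟩⟩)

theorem complNeighborSet_inter_neighborSet_subset (hα : Gᶜ.CliqueFree 3) {y a w : V}
    (hwy : ¬G.Adj w y) (hwa : ¬G.Adj w a) (hwy_ne : w ≠ y) :
    Gᶜ.neighborSet y ∩ G.neighborSet a ⊆ G.neighborSet a ∩ G.neighborSet w := by
  rintro v ⟨hvy, hva⟩
  rw [mem_neighborSet, compl_adj] at hvy
  refine ⟨hva, (adj_of_cliqueFree_compl hα ?_ (fun h ↦ hvy.2 h.symm) hwy hvy.1.symm hwy_ne).symm⟩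
  rintro rfl
  exact hwa hva.symm

theorem ncard_complNeighborSet_inter_neighborSet_le [Finite V] (hα : Gᶜ.CliqueFree 3)
    (hcrit : ∀ u v : V, G.Adj u v → ∃ w : V, w ≠ u ∧ w ≠ v ∧ ¬ G.Adj w u ∧ ¬ G.Adj w v)
    {m : ℤ} (hcommon : ∀ u v : V, u ≠ v → ¬ G.Adj u v →
      ((G.neighborSet u ∩ G.neighborSet v).ncard : ℤ) ≤ m)
    {y a : V} (hya : G.Adj y a) : ((Gᶜ.neighborSet y ∩ G.neighborSet a).ncard : ℤ) ≤ m := by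
  obtain ⟨w, hwy, hwa, hnwy, hnwa⟩ := hcrit y a hya
  have hsub := complNeighborSet_inter_neighborSet_subset hα hnwy hnwa hwy
  exact le_trans (by exact_mod_cast Set.ncard_le_ncard hsub)
    (hcommon a w hwa.symm fun h ↦ hnwa h.symm)

theorem card_le_ncard_commonNeighbors_add [Fintype V] {x y : V} (hxy : x ≠ y)
    (hnadj : ¬G.Adj x y) :
    Fintype.card V ≤ (G.neighborSet x ∩ G.neighborSet y).ncard + (Gᶜ.neighborSet y).ncard +
      (Gᶜ.neighborSet x).ncard := by
  have hcover : Set.univ ⊆ G.neighborSet x ∩ G.neighborSet y ∪ Gᶜ.neighborSet y ∪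
      Gᶜ.neighborSet x := by
    intro v _
    simp only [Set.mem_union, Set.mem_inter_iff, mem_neighborSet, compl_adj]
    by_cases hvy : v = y
    · subst hvy; exact Or.inr ⟨hxy, hnadj⟩
    by_cases hvx : v = x
    · subst hvx; exact Or.inl (Or.inr ⟨Ne.symm hxy, fun h ↦ hnadj h.symm⟩)
    by_cases hy : G.Adj y v <;> by_cases hx : G.Adj x v <;> simp_all [Ne.symm hvx, Ne.symm hvy]
  calc Fintype.card V = (Set.univ : Set V).ncard := by simp
    _ ≤ _ := Set.ncard_le_ncard hcover
    _ ≤ _ := (Set.ncard_union_le _ _).trans (by gcongr; exact Set.ncard_union_le _ _)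

end SimpleGraph

open SimpleGraph in
theorem statement_8_general {V : Type*} [Fintype V] (G : SimpleGraph V) (n ℓ : ℕ)
    (hn : Fintype.card V = n)
    (hα : Gᶜ.CliqueFree 3)
    (hcrit : ∀ u v : V, G.Adj u v → ∃ w : V, w ≠ u ∧ w ≠ v ∧ ¬ G.Adj w u ∧ ¬ G.Adj w v)
    (hsize : 4 * ℓ - 1 ≤ n)
    (hcommon : ∀ u v : V, u ≠ v → ¬ G.Adj u v →
      (((G.neighborSet u ∩ G.neighborSet v).ncard : ℤ)) ≤ (ℓ : ℤ) - 2)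
    (x y : V) (hxy : x ≠ y) (hnadj : ¬ G.Adj x y)
    (C X Y : Set V)
    (hC : C = G.neighborSet x ∩ G.neighborSet y)
    (hX : X = Set.univ \ insert y (G.neighborSet y))
    (hY : Y = Set.univ \ insert x (G.neighborSet x))
    (a : V) (ha : a ∈ C)
    (Xa Xbara Ya Ybara XC YC : Set V)
    (hXa : Xa = X ∩ G.neighborSet a) (hXbara : Xbara = X \ G.neighborSet a)
    (hYa : Ya = Y ∩ G.neighborSet a) (hYbara : Ybara = Y \ G.neighborSet a)
    (hXC : XC = {v ∈ X | C ⊆ G.neighborSet v})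
    (hYC : YC = {v ∈ Y | C ⊆ G.neighborSet v}) :
    XC.ncard ≤ Xa.ncard ∧ (Xa.ncard : ℤ) ≤ (ℓ : ℤ) - 2 ∧
    YC.ncard ≤ Ya.ncard ∧ (Ya.ncard : ℤ) ≤ (ℓ : ℤ) - 2 ∧
    (((n + 1) / 2 : ℕ) : ℤ) - (Y.ncard : ℤ) + 3 ≤ (Xbara.ncard : ℤ) ∧
    (((n + 1) / 2 : ℕ) : ℤ) - (X.ncard : ℤ) + 3 ≤ (Ybara.ncard : ℤ) := by
  subst hXa hXbara hYa hYbara hXC hYC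
  have hsep : ∀ S : Set V, {v ∈ S | C ⊆ G.neighborSet v} ⊆ S ∩ G.neighborSet a :=
    fun S v hv ↦ ⟨hv.1, (hv.2 ha).symm⟩
  subst hC hX hY hn
  obtain ⟨hax, hay⟩ := ha
  simp only [univ_diff_insert_neighborSet] at *
  have hXa := ncard_complNeighborSet_inter_neighborSet_le hα hcrit hcommon hay
  have hYa := ncard_complNeighborSet_inter_neighborSet_le hα hcrit hcommon hax
  have hCard := hcommon x y hxy hnadj
  have hcover := card_le_ncard_commonNeighbors_add hxy hnadj
  have hXsplit := Set.ncard_inter_add_ncard_sdiff_eq_ncard (Gᶜ.neighborSet y) (G.neighborSet a)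
  have hYsplit := Set.ncard_inter_add_ncard_sdiff_eq_ncard (Gᶜ.neighborSet x) (G.neighborSet a)
  exact ⟨Set.ncard_le_ncard (hsep _), hXa, Set.ncard_le_ncard (hsep _), hYa, by omega, by omega⟩

/-- Claim on sizes: in an edge-critical `n`-vertex graph `G` with independence number at
most 2, with `n ≥ 4ℓ - 1` and every non-adjacent pair having at most `ℓ - 2` common
neighbors, for non-adjacent `x, y` with `C = N(x) ∩ N(y)`, `X = V ∖ N[y]`, `Y = V ∖ N[x]`
and, for `a ∈ C`, `X_a = X ∩ N(a)`, `X̄_a = X ∖ N(a)`, `Y_a = Y ∩ N(a)`,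
`Ȳ_a = Y ∖ N(a)`, `X_C = {v ∈ X : C ⊆ N(v)}`, `Y_C = {v ∈ Y : C ⊆ N(v)}`:
`|X_C| ≤ |X_a| ≤ ℓ - 2`, `|Y_C| ≤ |Y_a| ≤ ℓ - 2`, `|X̄_a| ≥ ⌈n/2⌉ - |Y| + 3` and
`|Ȳ_a| ≥ ⌈n/2⌉ - |X| + 3`. -/
theorem statement_8 {V : Type*} [Fintype V] (G : SimpleGraph V) (n ℓ : ℕ)
    (hn : Fintype.card V = n) (hℓ : 1 ≤ ℓ)
    (hα : Gᶜ.CliqueFree 3)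
    (hcrit : ∀ u v : V, G.Adj u v → ∃ w : V, w ≠ u ∧ w ≠ v ∧ ¬ G.Adj w u ∧ ¬ G.Adj w v)
    (hsize : 4 * ℓ - 1 ≤ n)
    (hcommon : ∀ u v : V, u ≠ v → ¬ G.Adj u v →
      (((G.neighborSet u ∩ G.neighborSet v).ncard : ℤ)) ≤ (ℓ : ℤ) - 2)
    (x y : V) (hxy : x ≠ y) (hnadj : ¬ G.Adj x y)
    (C X Y : Set V)
    (hC : C = G.neighborSet x ∩ G.neighborSet y)
    (hX : X = Set.univ \ insert y (G.neighborSet y))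
    (hY : Y = Set.univ \ insert x (G.neighborSet x))
    (a : V) (ha : a ∈ C)
    (Xa Xbara Ya Ybara XC YC : Set V)
    (hXa : Xa = X ∩ G.neighborSet a) (hXbara : Xbara = X \ G.neighborSet a)
    (hYa : Ya = Y ∩ G.neighborSet a) (hYbara : Ybara = Y \ G.neighborSet a)
    (hXC : XC = {v ∈ X | C ⊆ G.neighborSet v})
    (hYC : YC = {v ∈ Y | C ⊆ G.neighborSet v}) :
    XC.ncard ≤ Xa.ncard ∧ (Xa.ncard : ℤ) ≤ (ℓ : ℤ) - 2 ∧
    YC.ncard ≤ Ya.ncard ∧ (Ya.ncard : ℤ) ≤ (ℓ : ℤ) - 2 ∧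
    (((n + 1) / 2 : ℕ) : ℤ) - (Y.ncard : ℤ) + 3 ≤ (Xbara.ncard : ℤ) ∧
    (((n + 1) / 2 : ℕ) : ℤ) - (X.ncard : ℤ) + 3 ≤ (Ybara.ncard : ℤ) :=
  statement_8_general G n ℓ hn hα hcrit hsize hcommon x y hxy hnadj C X Y hC hX hY a ha Xa Xbara Ya
    Ybara XC YC hXa hXbara hYa hYbara hXC hYC
end

section
/- Let ℓ be a positive integer and let G be a simple graph on n vertices with independence number at most 2 such that: G is edge-critical, n ≥ 4ℓ − 1, and every pair of non-adjacent vertices of G has at most ℓ − 2 common neighbors. Let x, y be non-adjacent vertices, C = N(x) ∩ N(y), X = V(G) \ N[y], Y = V(G) \ N[x], and for a ∈ C set X̄_a = X \ N(a) and Ȳ_a = Y \ N(a). Then for every a ∈ C, either |X \ X̄_a| ≥ 2(ℓ − |Ȳ_a|) or |Y \ Ȳ_a| ≥ 2(ℓ − |X̄_a|). -/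
/-!
Since `α(G) ≤ 2`, the non-neighbourhoods `X` and `Y` are cliques. Edge-criticality of `ya`
gives a vertex `u ∈ X̄_a`, and every vertex of `X ∖ X̄_a = X ∩ N(a)` is then a common neighbour
of the non-adjacent pair `a, u`; hence `|X ∖ X̄_a| ≤ ℓ - 2`, and likewise `|Y ∖ Ȳ_a| ≤ ℓ - 2`
and `|C| ≤ ℓ - 2`. As `V = C ∪ X ∪ Y`, counting gives `|X̄_a| + |Ȳ_a| ≥ 2ℓ + 3 - |X ∖ X̄_a|`
and the same with `Y ∖ Ȳ_a`; if `|X̄_a| ≤ |Ȳ_a|` the first bound gives the first alternative,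
otherwise the second gives the second.
-/

namespace SimpleGraph

variable {V : Type*} {G : SimpleGraph V}

theorem isClique_univ_diff_insert_neighborSet (hα : Gᶜ.CliqueFree 3) (y : V) :
    G.IsClique (Set.univ \ insert y (G.neighborSet y)) := by
  classical
  intro u hu v hv huv
  simp only [Set.mem_sdiff, Set.mem_univ, Set.mem_insert_iff, mem_neighborSet, true_and,
    not_or] at hu hv
  by_contra hnuv
  exact hα {u, v, y} (is3Clique_triple_iff.2
    ⟨⟨huv, hnuv⟩, ⟨hu.1, fun h => hu.2 h.symm⟩, ⟨hv.1, fun h => hv.2 h.symm⟩⟩)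

theorem inter_neighborSet_subset_of_isClique {K : Set V} (hK : G.IsClique K) {a u : V}
    (hu : u ∈ K \ G.neighborSet a) :
    K ∩ G.neighborSet a ⊆ G.neighborSet a ∩ G.neighborSet u := by
  rintro z ⟨hzK, hza⟩
  exact ⟨hza, (hK hzK hu.1 fun hzu => hu.2 (hzu ▸ hza)).symm⟩

theorem ncard_univ_diff_insert_inter_neighborSet_le [Finite V] (hα : Gᶜ.CliqueFree 3)
    (hcrit : ∀ u v : V, G.Adj u v → ∃ w : V, w ≠ u ∧ w ≠ v ∧ ¬ G.Adj w u ∧ ¬ G.Adj w v)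
    {k : ℤ} (hcommon : ∀ u v : V, u ≠ v → ¬ G.Adj u v →
      (((G.neighborSet u ∩ G.neighborSet v).ncard : ℤ)) ≤ k)
    {y a : V} (hya : G.Adj y a) :
    (((Set.univ \ insert y (G.neighborSet y)) ∩ G.neighborSet a).ncard : ℤ) ≤ k := by
  obtain ⟨u, huy, hua, hnuy, hnua⟩ := hcrit y a hya
  have hu : u ∈ (Set.univ \ insert y (G.neighborSet y)) \ G.neighborSet a := by
    simp only [Set.mem_sdiff, Set.mem_univ, Set.mem_insert_iff, mem_neighborSet, true_and,
      not_or]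
    exact ⟨⟨huy, fun h => hnuy h.symm⟩, fun h => hnua h.symm⟩
  calc _ ≤ ((G.neighborSet a ∩ G.neighborSet u).ncard : ℤ) := by
        exact_mod_cast Set.ncard_le_ncard
          (inter_neighborSet_subset_of_isClique (isClique_univ_diff_insert_neighborSet hα y) hu)
    _ ≤ k := hcommon a u (Ne.symm hua) fun h => hnua h.symm

theorem univ_subset_inter_union_univ_diff_union_univ_diff {x y : V} (hxy : x ≠ y)
    (hnadj : ¬ G.Adj x y) :
    Set.univ ⊆ (G.neighborSet x ∩ G.neighborSet y) ∪ (Set.univ \ insert y (G.neighborSet y)) ∪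
      (Set.univ \ insert x (G.neighborSet x)) := by
  intro z _
  simp only [Set.mem_union, Set.mem_inter_iff, Set.mem_sdiff, Set.mem_univ, Set.mem_insert_iff,
    mem_neighborSet, true_and]
  by_cases hzx : z = x
  · subst hzx; tauto
  by_cases hzy : z = y
  · subst hzy; exact Or.inr fun h => h.elim hxy.symm hnadj
  tauto

theorem card_le_ncard_inter_add_ncard_univ_diff_add [Finite V] {x y : V} (hxy : x ≠ y)
    (hnadj : ¬ G.Adj x y) :
    Nat.card V ≤ (G.neighborSet x ∩ G.neighborSet y).ncard +
      (Set.univ \ insert y (G.neighborSet y)).ncard +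
      (Set.univ \ insert x (G.neighborSet x)).ncard := by
  rw [← Set.ncard_univ]
  calc _ ≤ _ := Set.ncard_le_ncard (univ_subset_inter_union_univ_diff_union_univ_diff hxy hnadj)
    _ ≤ _ := (Set.ncard_union_le _ _).trans (Nat.add_le_add_right (Set.ncard_union_le _ _) _)

end SimpleGraph

open SimpleGraph in
theorem statement_9_general {V : Type*} [Fintype V] (G : SimpleGraph V) (n ℓ : ℕ)
    (hn : Fintype.card V = n)
    (hα : Gᶜ.CliqueFree 3)
    (hcrit : ∀ u v : V, G.Adj u v → ∃ w : V, w ≠ u ∧ w ≠ v ∧ ¬ G.Adj w u ∧ ¬ G.Adj w v)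
    (hsize : 4 * ℓ - 1 ≤ n)
    (hcommon : ∀ u v : V, u ≠ v → ¬ G.Adj u v →
      (((G.neighborSet u ∩ G.neighborSet v).ncard : ℤ)) ≤ (ℓ : ℤ) - 2)
    (x y : V) (hxy : x ≠ y) (hnadj : ¬ G.Adj x y)
    (C X Y : Set V)
    (hC : C = G.neighborSet x ∩ G.neighborSet y)
    (hX : X = Set.univ \ insert y (G.neighborSet y))
    (hY : Y = Set.univ \ insert x (G.neighborSet x))
    (a : V) (ha : a ∈ C)
    (Xbara Ybara : Set V)
    (hXbara : Xbara = X \ G.neighborSet a) (hYbara : Ybara = Y \ G.neighborSet a) :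
    2 * ((ℓ : ℤ) - (Ybara.ncard : ℤ)) ≤ ((X \ Xbara).ncard : ℤ) ∨
    2 * ((ℓ : ℤ) - (Xbara.ncard : ℤ)) ≤ ((Y \ Ybara).ncard : ℤ) := by
  subst hC hX hY hXbara hYbara
  have hXa := ncard_univ_diff_insert_inter_neighborSet_le hα hcrit hcommon ha.2
  have hYa := ncard_univ_diff_insert_inter_neighborSet_le hα hcrit hcommon ha.1
  have hCard := hcommon x y hxy hnadj
  have hcover := card_le_ncard_inter_add_ncard_univ_diff_add hxy hnadj
  rw [Nat.card_eq_fintype_card, hn] at hcover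
  rw [Set.sdiff_sdiff_right_self, Set.sdiff_sdiff_right_self]
  rw [← Set.ncard_inter_add_ncard_sdiff_eq_ncard (Set.univ \ insert y (G.neighborSet y))
    (G.neighborSet a), ← Set.ncard_inter_add_ncard_sdiff_eq_ncard
    (Set.univ \ insert x (G.neighborSet x)) (G.neighborSet a)] at hcover
  omega

/-- Claim: under the standing hypotheses, for every `a ∈ C`, either
`|X ∖ X̄_a| ≥ 2(ℓ - |Ȳ_a|)` or `|Y ∖ Ȳ_a| ≥ 2(ℓ - |X̄_a|)`. -/
theorem statement_9 {V : Type*} [Fintype V] (G : SimpleGraph V) (n ℓ : ℕ)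
    (hn : Fintype.card V = n) (hℓ : 1 ≤ ℓ)
    (hα : Gᶜ.CliqueFree 3)
    (hcrit : ∀ u v : V, G.Adj u v → ∃ w : V, w ≠ u ∧ w ≠ v ∧ ¬ G.Adj w u ∧ ¬ G.Adj w v)
    (hsize : 4 * ℓ - 1 ≤ n)
    (hcommon : ∀ u v : V, u ≠ v → ¬ G.Adj u v →
      (((G.neighborSet u ∩ G.neighborSet v).ncard : ℤ)) ≤ (ℓ : ℤ) - 2)
    (x y : V) (hxy : x ≠ y) (hnadj : ¬ G.Adj x y)
    (C X Y : Set V)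
    (hC : C = G.neighborSet x ∩ G.neighborSet y)
    (hX : X = Set.univ \ insert y (G.neighborSet y))
    (hY : Y = Set.univ \ insert x (G.neighborSet x))
    (a : V) (ha : a ∈ C)
    (Xbara Ybara : Set V)
    (hXbara : Xbara = X \ G.neighborSet a) (hYbara : Ybara = Y \ G.neighborSet a) :
    2 * ((ℓ : ℤ) - (Ybara.ncard : ℤ)) ≤ ((X \ Xbara).ncard : ℤ) ∨
    2 * ((ℓ : ℤ) - (Xbara.ncard : ℤ)) ≤ ((Y \ Ybara).ncard : ℤ) :=
  statement_9_general G n ℓ hn hα hcrit hsize hcommon x y hxy hnadj C X Y hC hX hY a ha Xbara Ybara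
    hXbara hYbara
end

section
/- Let ℓ be a positive integer and let G be a simple graph on n vertices with independence number at most 2 such that: G is edge-critical, n ≥ 4ℓ − 1, and every pair of non-adjacent vertices of G has at most ℓ − 2 common neighbors. Let x, y be non-adjacent vertices, C = N(x) ∩ N(y), X = V(G) \ N[y], Y = V(G) \ N[x], and let X̄_C (resp. Ȳ_C) be the set of vertices of X (resp. Y) not adjacent to some vertex of C. Then for every v ∈ X̄_C, |N(v) ∩ Ȳ_C| > ⌈n/2⌉ − |X|, and for every w ∈ Ȳ_C, |N(w) ∩ X̄_C| > ⌈n/2⌉ − |Y|. -/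
/-!
Write `X`, `Y`, `C` for `V \ N[y]`, `V \ N[x]` and `N(x) ∩ N(y)`. These cover `V`, so
`n ≤ |X| + |Y| + |C| ≤ |X| + |Y| + (ℓ - 2)`. Let `v ∈ X̄_C` miss `c ∈ C`. Edge-criticality of `xc`
gives `z` adjacent to neither `x` nor `c`, and `α(G) ≤ 2` forces `N(c) ∩ Y ⊆ N(z) ∩ N(c)`, so
`|N(c) ∩ Y| ≤ ℓ - 2`. Any other `w ∈ Y` misses `c`; as `v ∉ Y` (again by `α(G) ≤ 2`), the triple
`{v, c, w}` cannot be independent, so `vw` is an edge and `w ∈ N(v) ∩ Ȳ_C`. Hence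
`|N(v) ∩ Ȳ_C| ≥ |Y| - (ℓ - 2) ≥ n - |X| - 2(ℓ - 2)`, which exceeds `⌈n/2⌉ - |X|` as `n ≥ 4ℓ - 1`.
-/

namespace SimpleGraph

variable {V : Type*} (G : SimpleGraph V)

def nonNeighborSet (v : V) : Set V := Set.univ \ insert v (G.neighborSet v)

/-- With `C = G.commonNeighbors x y`, the paper's `X̄_C` is `G.nonNeighborsMissing C y` and its
`Ȳ_C` is `G.nonNeighborsMissing C x`. -/
def nonNeighborsMissing (C : Set V) (v : V) : Set V :=
  {u ∈ G.nonNeighborSet v | ¬ C ⊆ G.neighborSet u}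

variable {G}

@[simp]
theorem mem_nonNeighborSet {u v : V} : u ∈ G.nonNeighborSet v ↔ u ≠ v ∧ ¬ G.Adj v u := by
  simp [nonNeighborSet]

theorem adj_of_not_adj_of_not_adj (hα : Gᶜ.CliqueFree 3) {a b c : V}
    (hab : a ≠ b) (hac : a ≠ c) (hbc : b ≠ c) (nab : ¬ G.Adj a b) (nac : ¬ G.Adj a c) :
    G.Adj b c := by
  classical
  by_contra nbc
  exact hα {a, b, c} (is3Clique_triple_iff.2 ⟨(compl_adj _ _ _).2 ⟨hab, nab⟩,
    (compl_adj _ _ _).2 ⟨hac, nac⟩, (compl_adj _ _ _).2 ⟨hbc, nbc⟩⟩)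

theorem disjoint_nonNeighborSet (hα : Gᶜ.CliqueFree 3) {x y : V} (hxy : x ≠ y)
    (hnadj : ¬ G.Adj x y) : Disjoint (G.nonNeighborSet x) (G.nonNeighborSet y) :=
  Set.disjoint_left.2 fun _ hux huy => by
    obtain ⟨hux, nxu⟩ := mem_nonNeighborSet.1 hux
    obtain ⟨huy, nyu⟩ := mem_nonNeighborSet.1 huy
    exact hnadj <| adj_of_not_adj_of_not_adj hα hux huy hxy (fun h => nxu h.symm) fun h => nyu h.symm

theorem card_le_ncard_nonNeighborSet_add [Finite V] {x y : V} (hxy : x ≠ y)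
    (hnadj : ¬ G.Adj x y) :
    Nat.card V ≤ (G.nonNeighborSet y).ncard + (G.nonNeighborSet x).ncard +
      (G.commonNeighbors x y).ncard := by
  have hcover : Set.univ ⊆ G.nonNeighborSet y ∪ G.nonNeighborSet x ∪ G.commonNeighbors x y := by
    intro u _
    by_cases hyu : G.Adj y u
    · by_cases hxu : G.Adj x u
      · exact Or.inr ⟨hxu, hyu⟩
      · exact Or.inl (Or.inr (mem_nonNeighborSet.2 ⟨fun h => hnadj (h ▸ hyu.symm), hxu⟩))
    · by_cases huy : u = y
      · exact Or.inl (Or.inr (mem_nonNeighborSet.2 ⟨huy ▸ hxy.symm, huy ▸ hnadj⟩))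
      · exact Or.inl (Or.inl (mem_nonNeighborSet.2 ⟨huy, hyu⟩))
  calc Nat.card V = (Set.univ : Set V).ncard := Set.ncard_univ V |>.symm
    _ ≤ _ := Set.ncard_le_ncard hcover
    _ ≤ _ := (Set.ncard_union_le _ _).trans (by gcongr; exact Set.ncard_union_le _ _)

theorem nonNeighborSet_inter_neighborSet_subset (hα : Gᶜ.CliqueFree 3) {x c z : V}
    (hzx : z ≠ x) (nzx : ¬ G.Adj z x) (nzc : ¬ G.Adj z c) :
    G.nonNeighborSet x ∩ G.neighborSet c ⊆ G.commonNeighbors z c := by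
  rintro u ⟨hu, hcu⟩
  obtain ⟨hux, nxu⟩ := mem_nonNeighborSet.1 hu
  have huz : u ≠ z := by rintro rfl; exact nzc hcu.symm
  exact ⟨adj_of_not_adj_of_not_adj hα hzx.symm hux.symm huz.symm (fun h => nzx h.symm) nxu, hcu⟩

theorem nonNeighborSet_diff_neighborSet_subset (hα : Gᶜ.CliqueFree 3) {C : Set V} {x c v : V}
    (hc : c ∈ C) (hxc : G.Adj x c) (hv : v ∉ G.nonNeighborSet x) (hvc : v ≠ c)
    (nvc : ¬ G.Adj v c) :
    G.nonNeighborSet x \ G.neighborSet c ⊆ G.neighborSet v ∩ G.nonNeighborsMissing C x := by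
  rintro w ⟨hw, ncw⟩
  have hwc : w ≠ c := by rintro rfl; exact (mem_nonNeighborSet.1 hw).2 hxc
  have hwv : w ≠ v := by rintro rfl; exact hv hw
  exact ⟨adj_of_not_adj_of_not_adj hα hvc.symm hwc.symm hwv.symm (fun h => nvc h.symm) ncw,
    hw, fun hC => ncw (hC hc).symm⟩

theorem sub_le_ncard_neighborSet_inter_nonNeighborsMissing [Finite V] (hα : Gᶜ.CliqueFree 3)
    (hcrit : ∀ u v : V, G.Adj u v → ∃ w : V, w ≠ u ∧ w ≠ v ∧ ¬ G.Adj w u ∧ ¬ G.Adj w v)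
    {k : ℤ} (hcommon : ∀ u v : V, u ≠ v → ¬ G.Adj u v → ((G.commonNeighbors u v).ncard : ℤ) ≤ k)
    {x y v : V} (hxy : x ≠ y) (hnadj : ¬ G.Adj x y)
    (hv : v ∈ G.nonNeighborsMissing (G.commonNeighbors x y) y) :
    (Nat.card V : ℤ) - (G.nonNeighborSet y).ncard - 2 * k ≤
      (G.neighborSet v ∩ G.nonNeighborsMissing (G.commonNeighbors x y) x).ncard := by
  obtain ⟨hvX, hvC⟩ := hv
  obtain ⟨c, hc, nvc⟩ := Set.not_subset.1 hvC
  obtain ⟨z, hzx, hzc, nzx, nzc⟩ := hcrit x c hc.1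
  have hvc : v ≠ c := by rintro rfl; exact (mem_nonNeighborSet.1 hvX).2 hc.2
  have hvY : v ∉ G.nonNeighborSet x :=
    Set.disjoint_right.1 (disjoint_nonNeighborSet hα hxy hnadj) hvX
  have hYc : ((G.nonNeighborSet x ∩ G.neighborSet c).ncard : ℤ) ≤ k :=
    le_trans (Nat.cast_le.2 <| Set.ncard_le_ncard
      (nonNeighborSet_inter_neighborSet_subset hα hzx nzx nzc)) (hcommon z c hzc nzc)
  have hYv := Set.ncard_le_ncard
    (nonNeighborSet_diff_neighborSet_subset hα hc hc.1 hvY hvc nvc)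
  have hsplit := Set.ncard_inter_add_ncard_sdiff_eq_ncard (G.nonNeighborSet x) (G.neighborSet c)
  have hcover := card_le_ncard_nonNeighborSet_add hxy hnadj
  have hC := hcommon x y hxy hnadj
  omega

end SimpleGraph

open SimpleGraph in
theorem statement_10_general {V : Type*} [Fintype V] (G : SimpleGraph V) (n ℓ : ℕ)
    (hn : Fintype.card V = n)
    (hα : Gᶜ.CliqueFree 3)
    (hcrit : ∀ u v : V, G.Adj u v → ∃ w : V, w ≠ u ∧ w ≠ v ∧ ¬ G.Adj w u ∧ ¬ G.Adj w v)
    (hsize : 4 * ℓ - 1 ≤ n)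
    (hcommon : ∀ u v : V, u ≠ v → ¬ G.Adj u v →
      (((G.neighborSet u ∩ G.neighborSet v).ncard : ℤ)) ≤ (ℓ : ℤ) - 2)
    (x y : V) (hxy : x ≠ y) (hnadj : ¬ G.Adj x y)
    (C X Y : Set V)
    (hC : C = G.neighborSet x ∩ G.neighborSet y)
    (hX : X = Set.univ \ insert y (G.neighborSet y))
    (hY : Y = Set.univ \ insert x (G.neighborSet x))
    (XbarC YbarC : Set V)
    (hXbarC : XbarC = {v ∈ X | ¬ C ⊆ G.neighborSet v})
    (hYbarC : YbarC = {v ∈ Y | ¬ C ⊆ G.neighborSet v}) :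
    (∀ v ∈ XbarC,
      (((n + 1) / 2 : ℕ) : ℤ) - (X.ncard : ℤ) < ((G.neighborSet v ∩ YbarC).ncard : ℤ)) ∧
    (∀ w ∈ YbarC,
      (((n + 1) / 2 : ℕ) : ℤ) - (Y.ncard : ℤ) < ((G.neighborSet w ∩ XbarC).ncard : ℤ)) := by
  replace hC : C = G.commonNeighbors x y := hC
  replace hX : X = G.nonNeighborSet y := hX
  replace hY : Y = G.nonNeighborSet x := hY
  replace hXbarC : XbarC = G.nonNeighborsMissing C y := by rw [hXbarC, hX]; rfl
  replace hYbarC : YbarC = G.nonNeighborsMissing C x := by rw [hYbarC, hY]; rfl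
  rw [← Nat.card_eq_fintype_card] at hn
  subst hn hC hX hY hXbarC hYbarC
  refine ⟨fun v hv => ?_, fun w hw => ?_⟩
  · have := sub_le_ncard_neighborSet_inter_nonNeighborsMissing hα hcrit hcommon hxy hnadj hv
    omega
  · rw [commonNeighbors_symm] at hw ⊢
    have := sub_le_ncard_neighborSet_inter_nonNeighborsMissing hα hcrit hcommon hxy.symm
      (fun h => hnadj h.symm) hw
    omega

/-- Claim: under the standing hypotheses, every `v ∈ X̄_C` satisfies
`|N(v) ∩ Ȳ_C| > ⌈n/2⌉ - |X|` and every `w ∈ Ȳ_C` satisfies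
`|N(w) ∩ X̄_C| > ⌈n/2⌉ - |Y|`. -/
theorem statement_10 {V : Type*} [Fintype V] (G : SimpleGraph V) (n ℓ : ℕ)
    (hn : Fintype.card V = n) (hℓ : 1 ≤ ℓ)
    (hα : Gᶜ.CliqueFree 3)
    (hcrit : ∀ u v : V, G.Adj u v → ∃ w : V, w ≠ u ∧ w ≠ v ∧ ¬ G.Adj w u ∧ ¬ G.Adj w v)
    (hsize : 4 * ℓ - 1 ≤ n)
    (hcommon : ∀ u v : V, u ≠ v → ¬ G.Adj u v →
      (((G.neighborSet u ∩ G.neighborSet v).ncard : ℤ)) ≤ (ℓ : ℤ) - 2)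
    (x y : V) (hxy : x ≠ y) (hnadj : ¬ G.Adj x y)
    (C X Y : Set V)
    (hC : C = G.neighborSet x ∩ G.neighborSet y)
    (hX : X = Set.univ \ insert y (G.neighborSet y))
    (hY : Y = Set.univ \ insert x (G.neighborSet x))
    (XbarC YbarC : Set V)
    (hXbarC : XbarC = {v ∈ X | ¬ C ⊆ G.neighborSet v})
    (hYbarC : YbarC = {v ∈ Y | ¬ C ⊆ G.neighborSet v}) :
    (∀ v ∈ XbarC,
      (((n + 1) / 2 : ℕ) : ℤ) - (X.ncard : ℤ) < ((G.neighborSet v ∩ YbarC).ncard : ℤ)) ∧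
    (∀ w ∈ YbarC,
      (((n + 1) / 2 : ℕ) : ℤ) - (Y.ncard : ℤ) < ((G.neighborSet w ∩ XbarC).ncard : ℤ)) :=
  statement_10_general G n ℓ hn hα hcrit hsize hcommon x y hxy hnadj C X Y hC hX hY XbarC YbarC
    hXbarC hYbarC
end

section
/- Let ℓ be a positive integer and let G be a simple graph on n vertices with independence number at most 2 such that: G is edge-critical, n ≥ 4ℓ − 1, and every pair of non-adjacent vertices of G has at most ℓ − 2 common neighbors. Let x, y be non-adjacent vertices, C = N(x) ∩ N(y), X = V(G) \ N[y], Y = V(G) \ N[x]; for a ∈ C set X̄_a = X \ N(a) and Ȳ_a = Y \ N(a); let X_C (resp. Y_C) be the set of vertices of X (resp. Y) adjacent to all of C, and X̄_C = X \ X_C, Ȳ_C = Y \ Y_C. Then for every a ∈ C: (i) if |X̄_C| < ℓ, then |X_C| > ⌈n/2⌉ − ℓ − |Ȳ_a| ≥ ℓ − |Ȳ_a|; and (ii) if |Ȳ_C| < ℓ, then |Y_C| > ⌈n/2⌉ − ℓ − |X̄_a| ≥ ℓ − |X̄_a|. -/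
/-!
Since `x` and `y` are non-adjacent and `α(G) ≤ 2`, every vertex lies in `N[x] ∪ N[y]`, so `X`, `Y`
and `C` partition the vertex set. Edge-criticality of `ax` yields a vertex `w` adjacent to neither
`a` nor `x`; again by `α(G) ≤ 2`, every neighbour of `a` in `Y` is adjacent to `w`, so
`|Y ∩ N(a)| ≤ |N(a) ∩ N(w)| ≤ ℓ - 2`. Together with `|C| ≤ ℓ - 2` and `|X̄_C| < ℓ` this gives
`n < |X_C| + |Ȳ_a| + 3ℓ - 4`, and `n ≥ 4ℓ - 1` turns this into the claimed bounds.
-/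

open Set

namespace SimpleGraph

variable {V : Type*} {G : SimpleGraph V}

theorem adj_or_adj_of_compl_cliqueFree_three (hα : Gᶜ.CliqueFree 3) {u w v : V}
    (huw : u ≠ w) (hnadj : ¬G.Adj u w) (hvu : v ≠ u) (hvw : v ≠ w) :
    G.Adj u v ∨ G.Adj w v := by
  classical
  by_contra! h
  exact hα {u, w, v} (is3Clique_triple_iff.2
    ⟨(G.compl_adj u w).2 ⟨huw, hnadj⟩, (G.compl_adj u v).2 ⟨hvu.symm, h.1⟩,
      (G.compl_adj w v).2 ⟨hvw.symm, h.2⟩⟩)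

theorem insert_neighborSet_union_insert_neighborSet (hα : Gᶜ.CliqueFree 3) {x y : V}
    (hxy : x ≠ y) (hnadj : ¬G.Adj x y) :
    insert x (G.neighborSet x) ∪ insert y (G.neighborSet y) = univ := by
  refine eq_univ_of_forall fun v => ?_
  by_cases hvx : v = x
  · exact Or.inl (Or.inl hvx)
  by_cases hvy : v = y
  · exact Or.inr (Or.inl hvy)
  rcases adj_or_adj_of_compl_cliqueFree_three hα hxy hnadj hvx hvy with h | h
  · exact Or.inl (Or.inr h)
  · exact Or.inr (Or.inr h)

theorem insert_neighborSet_inter_insert_neighborSet {x y : V} (hxy : x ≠ y)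
    (hnadj : ¬G.Adj x y) :
    insert x (G.neighborSet x) ∩ insert y (G.neighborSet y) =
      G.neighborSet x ∩ G.neighborSet y := by
  ext v
  simp only [mem_inter_iff, mem_insert_iff, mem_neighborSet]
  constructor
  · rintro ⟨rfl | hxv, rfl | hyv⟩
    · exact absurd rfl hxy
    · exact absurd hyv.symm hnadj
    · exact absurd hxv hnadj
    · exact ⟨hxv, hyv⟩
  · rintro ⟨hxv, hyv⟩
    exact ⟨Or.inr hxv, Or.inr hyv⟩

theorem ncard_add_ncard_add_ncard_eq_card [Fintype V] (hα : Gᶜ.CliqueFree 3) {x y : V}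
    (hxy : x ≠ y) (hnadj : ¬G.Adj x y) :
    (univ \ insert y (G.neighborSet y)).ncard + (univ \ insert x (G.neighborSet x)).ncard +
      (G.neighborSet x ∩ G.neighborSet y).ncard = Fintype.card V := by
  have hunion := ncard_union_add_ncard_inter (insert x (G.neighborSet x)) (insert y (G.neighborSet y))
  have hx := ncard_add_ncard_compl (insert x (G.neighborSet x))
  have hy := ncard_add_ncard_compl (insert y (G.neighborSet y))
  rw [insert_neighborSet_union_insert_neighborSet hα hxy hnadj, ncard_univ,
    insert_neighborSet_inter_insert_neighborSet hxy hnadj] at hunion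
  rw [← compl_eq_univ_sdiff, ← compl_eq_univ_sdiff, ← Nat.card_eq_fintype_card]
  omega

theorem inter_neighborSet_subset_inter_neighborSet (hα : Gᶜ.CliqueFree 3) {a x w : V}
    (hxw : x ≠ w) (hnxw : ¬G.Adj x w) (hnaw : ¬G.Adj a w) :
    (univ \ insert x (G.neighborSet x)) ∩ G.neighborSet a ⊆
      G.neighborSet a ∩ G.neighborSet w := by
  rintro v ⟨hvY, hav⟩
  simp only [mem_sdiff, mem_univ, mem_insert_iff, mem_neighborSet, not_or, true_and] at hvY
  have hvw : v ≠ w := by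
    rintro rfl
    exact hnaw hav
  exact ⟨hav, (adj_or_adj_of_compl_cliqueFree_three hα hxw hnxw hvY.1 hvw).resolve_left hvY.2⟩

theorem card_le_ncard_add_ncard_sdiff_neighborSet [Fintype V] {ℓ : ℕ}
    (hα : Gᶜ.CliqueFree 3)
    (hcrit : ∀ u v : V, G.Adj u v → ∃ w : V, w ≠ u ∧ w ≠ v ∧ ¬G.Adj w u ∧ ¬G.Adj w v)
    (hcommon : ∀ u v : V, u ≠ v → ¬G.Adj u v →
      ((G.neighborSet u ∩ G.neighborSet v).ncard : ℤ) ≤ ℓ - 2)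
    {x y a : V} (hxy : x ≠ y) (hnadj : ¬G.Adj x y) (hxa : G.Adj x a) :
    (Fintype.card V : ℤ) ≤ (univ \ insert y (G.neighborSet y)).ncard +
      ((univ \ insert x (G.neighborSet x)) \ G.neighborSet a).ncard + 2 * (ℓ - 2) := by
  obtain ⟨w, hwa, hwx, hnwa, hnwx⟩ := hcrit a x hxa.symm
  have hYa : (((univ \ insert x (G.neighborSet x)) ∩ G.neighborSet a).ncard : ℤ) ≤ ℓ - 2 :=
    le_trans (by exact_mod_cast ncard_le_ncard (inter_neighborSet_subset_inter_neighborSet hα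
      hwx.symm (fun h => hnwx h.symm) (fun h => hnwa h.symm)))
      (hcommon a w hwa.symm (fun h => hnwa h.symm))
  have hC := hcommon x y hxy hnadj
  have hpart := ncard_add_ncard_add_ncard_eq_card hα hxy hnadj
  have hYsplit := ncard_inter_add_ncard_sdiff_eq_ncard (univ \ insert x (G.neighborSet x))
    (G.neighborSet a)
  omega

end SimpleGraph

open SimpleGraph

theorem ceilHalf_bounds_of_le {n ℓ p q r : ℕ} (hsize : 4 * ℓ - 1 ≤ n)
    (hn : (n : ℤ) ≤ (r + p : ℕ) + q + 2 * (ℓ - 2)) (hr : r < ℓ) :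
    (((n + 1) / 2 : ℕ) : ℤ) - ℓ - q < p ∧ (ℓ : ℤ) - q ≤ (((n + 1) / 2 : ℕ) : ℤ) - ℓ - q := by
  omega

theorem statement_11_general {V : Type*} [Fintype V] (G : SimpleGraph V) (n ℓ : ℕ)
    (hn : Fintype.card V = n)
    (hα : Gᶜ.CliqueFree 3)
    (hcrit : ∀ u v : V, G.Adj u v → ∃ w : V, w ≠ u ∧ w ≠ v ∧ ¬ G.Adj w u ∧ ¬ G.Adj w v)
    (hsize : 4 * ℓ - 1 ≤ n)
    (hcommon : ∀ u v : V, u ≠ v → ¬ G.Adj u v →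
      (((G.neighborSet u ∩ G.neighborSet v).ncard : ℤ)) ≤ (ℓ : ℤ) - 2)
    (x y : V) (hxy : x ≠ y) (hnadj : ¬ G.Adj x y)
    (C X Y : Set V)
    (hC : C = G.neighborSet x ∩ G.neighborSet y)
    (hX : X = Set.univ \ insert y (G.neighborSet y))
    (hY : Y = Set.univ \ insert x (G.neighborSet x))
    (a : V) (ha : a ∈ C)
    (Xbara Ybara XC XbarC YC YbarC : Set V)
    (hXbara : Xbara = X \ G.neighborSet a) (hYbara : Ybara = Y \ G.neighborSet a)
    (hXC : XC = {v ∈ X | C ⊆ G.neighborSet v}) (hXbarC : XbarC = X \ XC)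
    (hYC : YC = {v ∈ Y | C ⊆ G.neighborSet v}) (hYbarC : YbarC = Y \ YC) :
    (XbarC.ncard < ℓ →
      (((n + 1) / 2 : ℕ) : ℤ) - (ℓ : ℤ) - (Ybara.ncard : ℤ) < (XC.ncard : ℤ) ∧
      (ℓ : ℤ) - (Ybara.ncard : ℤ) ≤ (((n + 1) / 2 : ℕ) : ℤ) - (ℓ : ℤ) - (Ybara.ncard : ℤ)) ∧
    (YbarC.ncard < ℓ →
      (((n + 1) / 2 : ℕ) : ℤ) - (ℓ : ℤ) - (Xbara.ncard : ℤ) < (YC.ncard : ℤ) ∧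
      (ℓ : ℤ) - (Xbara.ncard : ℤ) ≤ (((n + 1) / 2 : ℕ) : ℤ) - (ℓ : ℤ) - (Xbara.ncard : ℤ)) := by
  subst hn
  obtain ⟨hxa, hya⟩ : G.Adj x a ∧ G.Adj y a := by rwa [hC] at ha
  have hXsplit : XbarC.ncard + XC.ncard = X.ncard :=
    hXbarC ▸ ncard_sdiff_add_ncard_of_subset (hXC ▸ sep_subset _ _)
  have hYsplit : YbarC.ncard + YC.ncard = Y.ncard :=
    hYbarC ▸ ncard_sdiff_add_ncard_of_subset (hYC ▸ sep_subset _ _)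
  have hXside := card_le_ncard_add_ncard_sdiff_neighborSet hα hcrit hcommon hxy hnadj hxa
  have hYside := card_le_ncard_add_ncard_sdiff_neighborSet hα hcrit hcommon hxy.symm
    (fun h => hnadj h.symm) hya
  rw [← hX, ← hY, ← hYbara, ← hXsplit] at hXside
  rw [← hX, ← hY, ← hXbara, ← hYsplit] at hYside
  exact ⟨ceilHalf_bounds_of_le hsize hXside, ceilHalf_bounds_of_le hsize hYside⟩

/-- Claim: under the standing hypotheses, for every `a ∈ C`:
(i) if `|X̄_C| < ℓ` then `|X_C| > ⌈n/2⌉ - ℓ - |Ȳ_a| ≥ ℓ - |Ȳ_a|`; and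
(ii) if `|Ȳ_C| < ℓ` then `|Y_C| > ⌈n/2⌉ - ℓ - |X̄_a| ≥ ℓ - |X̄_a|`. -/
theorem statement_11 {V : Type*} [Fintype V] (G : SimpleGraph V) (n ℓ : ℕ)
    (hn : Fintype.card V = n) (hℓ : 1 ≤ ℓ)
    (hα : Gᶜ.CliqueFree 3)
    (hcrit : ∀ u v : V, G.Adj u v → ∃ w : V, w ≠ u ∧ w ≠ v ∧ ¬ G.Adj w u ∧ ¬ G.Adj w v)
    (hsize : 4 * ℓ - 1 ≤ n)
    (hcommon : ∀ u v : V, u ≠ v → ¬ G.Adj u v →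
      (((G.neighborSet u ∩ G.neighborSet v).ncard : ℤ)) ≤ (ℓ : ℤ) - 2)
    (x y : V) (hxy : x ≠ y) (hnadj : ¬ G.Adj x y)
    (C X Y : Set V)
    (hC : C = G.neighborSet x ∩ G.neighborSet y)
    (hX : X = Set.univ \ insert y (G.neighborSet y))
    (hY : Y = Set.univ \ insert x (G.neighborSet x))
    (a : V) (ha : a ∈ C)
    (Xbara Ybara XC XbarC YC YbarC : Set V)
    (hXbara : Xbara = X \ G.neighborSet a) (hYbara : Ybara = Y \ G.neighborSet a)
    (hXC : XC = {v ∈ X | C ⊆ G.neighborSet v}) (hXbarC : XbarC = X \ XC)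
    (hYC : YC = {v ∈ Y | C ⊆ G.neighborSet v}) (hYbarC : YbarC = Y \ YC) :
    (XbarC.ncard < ℓ →
      (((n + 1) / 2 : ℕ) : ℤ) - (ℓ : ℤ) - (Ybara.ncard : ℤ) < (XC.ncard : ℤ) ∧
      (ℓ : ℤ) - (Ybara.ncard : ℤ) ≤ (((n + 1) / 2 : ℕ) : ℤ) - (ℓ : ℤ) - (Ybara.ncard : ℤ)) ∧
    (YbarC.ncard < ℓ →
      (((n + 1) / 2 : ℕ) : ℤ) - (ℓ : ℤ) - (Xbara.ncard : ℤ) < (YC.ncard : ℤ) ∧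
      (ℓ : ℤ) - (Xbara.ncard : ℤ) ≤ (((n + 1) / 2 : ℕ) : ℤ) - (ℓ : ℤ) - (Xbara.ncard : ℤ)) :=
  statement_11_general G n ℓ hn hα hcrit hsize hcommon x y hxy hnadj C X Y hC hX hY a ha Xbara Ybara
    XC XbarC YC YbarC hXbara hYbara hXC hXbarC hYC hYbarC
end

section
/- Let G be a simple graph on n vertices with independence number at most 2, let ℓ be a positive integer with ℓ ≤ ⌈n/2⌉ − 1, and let x and y be two non-adjacent vertices of G having at least ℓ − 1 common neighbors. If the graph G − x − y (obtained from G by deleting x and y) contains an immersion of K_{ℓ, ⌈n/2⌉ − 1 − ℓ}, then G contains an immersion of K_{ℓ, ⌈n/2⌉ − ℓ}. -/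
/-!
Let `a i` (`i < ℓ`) and `b j` be the branch vertices of the two sides of the given immersion in
`G - x - y`; a new branch vertex is added to the side of the `b j`. As `α(G) ≤ 2` and `x, y` are
non-adjacent, every `a i` is adjacent to `x` or to `y`. If all of them are adjacent to `x`, the
new vertex is `x`, joined to each `a i` by an edge. Otherwise some `a i₀` is adjacent to `y` only,
and the new vertex is `y`: it is joined by an edge to each `a i` it is adjacent to, and to every
other `a i` by a detour `y - c i - x - a i` through distinct common neighbours `c i` of `x` and
`y` outside the range of `a`. There are enough of them: the indices needing a detour and the
indices `i` with `a i` a common neighbour are disjoint and both miss `i₀`, so together there are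
at most `ℓ - 1` of them, and `x` and `y` have at least `ℓ - 1` common neighbours.

Every new edge joins `x` or `y` to a vertex outside `{x, y}` that determines its path, so the
new paths are pairwise edge-disjoint, and they avoid the old paths, which live in `G - x - y`.
-/

open Function SimpleGraph

namespace SimpleGraph

variable {V V' ι α β β' : Type*} {G : SimpleGraph V} {G' : SimpleGraph V'}

lemma Walk.mem_range_of_mem_support_map {u v : V'} {p : G'.Walk u v} (f : G' →g G) {w : V}
    (hw : w ∈ (p.map f).support) : w ∈ Set.range f := by
  rw [Walk.support_map, List.mem_map] at hw
  obtain ⟨w', -, rfl⟩ := hw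
  exact ⟨w', rfl⟩

/-- An immersion of `completeBipartiteGraph α β` in `G`, recording only the path of each edge
`s(inl i, inr j)` oriented from `left i` to `right j` (see
`immersion_completeBipartiteGraph_iff`). -/
structure CompleteBipartiteImmersion (G : SimpleGraph V) (α β : Type*) where
  left : α → V
  right : β → V
  injective : Injective (Sum.elim left right)
  walk : ∀ i j, G.Walk (left i) (right j)
  isPath : ∀ i j, (walk i j).IsPath
  pairwise_disjoint :
    Pairwise fun p q : α × β ↦ (walk p.1 p.2).edges.Disjoint (walk q.1 q.2).edges

namespace CompleteBipartiteImmersion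

lemma left_injective (I : CompleteBipartiteImmersion G α β) : Injective I.left :=
  I.injective.comp Sum.inl_injective

lemma right_injective (I : CompleteBipartiteImmersion G α β) : Injective I.right :=
  I.injective.comp Sum.inr_injective

lemma left_ne_right (I : CompleteBipartiteImmersion G α β) (i : α) (j : β) :
    I.left i ≠ I.right j :=
  I.injective.ne Sum.inl_ne_inr

def orientedWalk (I : CompleteBipartiteImmersion G α β) :
    ∀ u v, (completeBipartiteGraph α β).Adj u v →
      G.Walk (Sum.elim I.left I.right u) (Sum.elim I.left I.right v)
  | .inl i, .inr j, _ => I.walk i j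
  | .inr j, .inl i, _ => (I.walk i j).reverse
  | .inl _, .inl _, h => absurd h (by simp)
  | .inr _, .inr _, h => absurd h (by simp)

lemma exists_orientedWalk_eq (I : CompleteBipartiteImmersion G α β) (u v : α ⊕ β)
    (h : (completeBipartiteGraph α β).Adj u v) :
    ∃ i j, s(u, v) = s(.inl i, .inr j) ∧ (I.orientedWalk u v h).IsPath ∧
      ∀ e, e ∈ (I.orientedWalk u v h).edges ↔ e ∈ (I.walk i j).edges := by
  rcases u with i | j <;> rcases v with i' | j'
  · simp at h
  · exact ⟨i, j', rfl, I.isPath i j', fun _ ↦ Iff.rfl⟩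
  · exact ⟨i', j, Sym2.eq_swap, (I.isPath i' j).reverse, by simp [orientedWalk]⟩
  · simp at h

theorem immersion (I : CompleteBipartiteImmersion G α β) :
    Immersion G (completeBipartiteGraph α β) := by
  refine ⟨_, I.injective, I.orientedWalk, fun u v h ↦ ?_, fun u v u' v' h h' hne e he he' ↦ ?_⟩
  · obtain ⟨-, -, -, hpath, -⟩ := I.exists_orientedWalk_eq u v h
    exact hpath
  obtain ⟨i, j, huv, -, hmem⟩ := I.exists_orientedWalk_eq u v h
  obtain ⟨i', j', huv', -, hmem'⟩ := I.exists_orientedWalk_eq u' v' h'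
  have hij : (i, j) ≠ (i', j') := by
    rintro ⟨⟩
    exact hne (huv.trans huv'.symm)
  exact I.pairwise_disjoint hij ((hmem e).1 he) ((hmem' e).1 he')

def map (I : CompleteBipartiteImmersion G' α β) (φ : G' ↪g G) :
    CompleteBipartiteImmersion G α β where
  left := φ ∘ I.left
  right := φ ∘ I.right
  injective := by rw [← Sum.comp_elim]; exact φ.injective.comp I.injective
  walk i j := (I.walk i j).map φ.toHom
  isPath i j := (I.isPath i j).map φ.injective
  pairwise_disjoint p q hpq := by
    dsimp only
    rw [Walk.edges_map, Walk.edges_map]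
    exact (I.pairwise_disjoint hpq).map (Sym2.map.injective φ.injective)

def comapRight (I : CompleteBipartiteImmersion G α β) (e : β' ↪ β) :
    CompleteBipartiteImmersion G α β' where
  left := I.left
  right := I.right ∘ e
  injective := I.left_injective.sumElim (I.right_injective.comp e.injective) fun i j ↦
    I.left_ne_right i (e j)
  walk i j := I.walk i (e j)
  isPath i j := I.isPath i (e j)
  pairwise_disjoint p q hpq :=
    I.pairwise_disjoint (show (p.1, e p.2) ≠ (q.1, e q.2) by simpa [Prod.ext_iff] using hpq)

def extend (I : CompleteBipartiteImmersion G α β) (z : V)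
    (hz : z ∉ Set.range (Sum.elim I.left I.right)) (R : ∀ i, G.Walk z (I.left i))
    (hR : ∀ i, (R i).IsPath) (hRR : Pairwise fun i i' ↦ (R i).edges.Disjoint (R i').edges)
    (hRI : ∀ i i' j, (R i).edges.Disjoint (I.walk i' j).edges) :
    CompleteBipartiteImmersion G α (Option β) where
  left := I.left
  right o := o.elim z I.right
  injective := by
    refine I.left_injective.sumElim ?_ ?_
    · rintro (_ | j) (_ | j') h
      · rfl
      · exact absurd ⟨.inr j', h.symm⟩ hz
      · exact absurd ⟨.inr j, h⟩ hz
      · exact congrArg some (I.right_injective h)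
    · rintro i (_ | j) h
      · exact hz ⟨.inl i, h⟩
      · exact I.left_ne_right i j h
  walk
    | i, none => (R i).reverse
    | i, some j => I.walk i j
  isPath
    | i, none => (hR i).reverse
    | i, some j => I.isPath i j
  pairwise_disjoint := by
    rintro ⟨i, _ | j⟩ ⟨i', _ | j'⟩ hne
    -- `show` reduces `none.elim z I.right` to `z`, so that `Walk.edges_reverse` can rewrite
    · show (R i).reverse.edges.Disjoint (R i').reverse.edges
      simp only [Walk.edges_reverse, List.disjoint_reverse_left, List.disjoint_reverse_right]
      exact hRR fun h ↦ hne (by rw [h])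
    · show (R i).reverse.edges.Disjoint (I.walk i' j').edges
      simpa only [Walk.edges_reverse, List.disjoint_reverse_left] using hRI i i' j'
    · show (I.walk i j).edges.Disjoint (R i').reverse.edges
      simpa only [Walk.edges_reverse, List.disjoint_reverse_right] using (hRI i' i j).symm
    · exact I.pairwise_disjoint (show (i, j) ≠ (i', j') by simpa using hne)

end CompleteBipartiteImmersion

theorem immersion_completeBipartiteGraph_iff :
    Immersion G (completeBipartiteGraph α β) ↔ Nonempty (CompleteBipartiteImmersion G α β) := by
  refine ⟨fun ⟨f, hf, P, hP, hdisj⟩ ↦ ?_, fun ⟨I⟩ ↦ I.immersion⟩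
  have hadj (i : α) (j : β) : (completeBipartiteGraph α β).Adj (.inl i) (.inr j) := by simp
  refine ⟨⟨f ∘ .inl, f ∘ .inr, by rwa [Sum.elim_comp_inl_inr], fun i j ↦ P _ _ (hadj i j),
    fun i j ↦ hP _ _ _, fun p q hpq ↦ hdisj _ _ _ _ _ _ ?_⟩⟩
  simpa [Prod.ext_iff] using hpq

lemma adj_or_adj_of_cliqueFree_compl {x y v : V} (hα : Gᶜ.CliqueFree 3) (hxy : x ≠ y)
    (hnadj : ¬ G.Adj x y) (hvx : v ≠ x) (hvy : v ≠ y) : G.Adj x v ∨ G.Adj y v := by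
  classical
  by_contra! h
  exact hα {x, y, v} (is3Clique_triple_iff.2 ⟨⟨hxy, hnadj⟩, ⟨hvx.symm, h.1⟩, ⟨hvy.symm, h.2⟩⟩)

lemma pairwise_disjoint_edges_of_owned_endpoint {u w : ι → V} (R : ∀ i, G.Walk (u i) (w i))
    (S : Set V) (owns : ι → V → Prop) (howns : ∀ i j v, owns i v → owns j v → i = j)
    (hR : ∀ i, ∀ e ∈ (R i).edges, ∃ s ∈ S, ∃ v ∉ S, owns i v ∧ e = s(s, v)) :
    Pairwise fun i j ↦ (R i).edges.Disjoint (R j).edges := by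
  intro i j hij e hi hj
  obtain ⟨s, -, v, hv, hiv, rfl⟩ := hR i _ hi
  obtain ⟨s', hs', v', -, hjv', he⟩ := hR j _ hj
  rcases Sym2.eq_iff.1 he with ⟨-, rfl⟩ | ⟨-, rfl⟩
  · exact hij (howns i j v hiv hjv')
  · exact hv hs'

theorem exists_star_paths_of_embedding {z w : V} {a : ι → V} (ha : Injective a)
    (haz : ∀ i, a i ≠ z) (haw : ∀ i, a i ≠ w)
    (hcover : ∀ i, G.Adj z (a i) ∨ G.Adj w (a i))
    (c : {i | ¬ G.Adj z (a i)} ↪ ↥((G.neighborSet z ∩ G.neighborSet w) \ Set.range a)) :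
    ∃ R : ∀ i, G.Walk z (a i), (∀ i, (R i).IsPath) ∧ (∀ i, ∀ e ∈ (R i).edges, z ∈ e ∨ w ∈ e) ∧
      Pairwise fun i j ↦ (R i).edges.Disjoint (R j).edges := by
  classical
  have hc (t) : G.Adj z (c t) ∧ G.Adj w (c t) ∧ (c t : V) ∉ Set.range a :=
    ⟨(c t).2.1.1, (c t).2.1.2, (c t).2.2⟩
  have hwa (t : {i | ¬ G.Adj z (a i)}) : G.Adj w (a t) := (hcover t).resolve_left t.2
  let R : ∀ i, G.Walk z (a i) := fun i ↦
    if h : G.Adj z (a i) then h.toWalk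
    else .cons (hc ⟨i, h⟩).1 (.cons (hc ⟨i, h⟩).2.1.symm (hwa ⟨i, h⟩).toWalk)
  have hR (i) : (R i).IsPath ∧ ∀ e ∈ (R i).edges, ∃ s ∈ ({z, w} : Set V), ∃ v ∉ ({z, w} : Set V),
      (v = a i ∨ ∃ h, v = c ⟨i, h⟩) ∧ e = s(s, v) := by
    by_cases h : G.Adj z (a i)
    · simp only [R, dif_pos h, h.isPath_toWalk, h.edges_toWalk, List.mem_singleton, true_and]
      rintro e rfl
      exact ⟨z, by simp, a i, by simp [haz i, haw i], .inl rfl, rfl⟩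
    · obtain ⟨hzc, hwc, hca⟩ := hc ⟨i, h⟩
      have hza : z ≠ a i := (haz i).symm
      have hzw : z ≠ w := fun hzw ↦ h (hzw ▸ hwa ⟨i, h⟩)
      have hca' : (c ⟨i, h⟩ : V) ≠ a i := fun hca' ↦ hca ⟨i, hca'.symm⟩
      simp only [R, dif_neg h, Walk.cons_isPath_iff, (hwa ⟨i, h⟩).isPath_toWalk,
        (hwa ⟨i, h⟩).support_toWalk, Walk.edges_cons, (hwa ⟨i, h⟩).edges_toWalk]
      refine ⟨⟨⟨trivial, ?_⟩, ?_⟩, ?_⟩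
      · simp [hwc.ne', hca']
      · simp [hzc.ne, hzw, hza]
      · simp only [List.mem_cons, List.not_mem_nil, or_false]
        have hcS : (c ⟨i, h⟩ : V) ∉ ({z, w} : Set V) := by simp [hzc.ne', hwc.ne']
        rintro e (rfl | rfl | rfl)
        · exact ⟨z, by simp, _, hcS, .inr ⟨h, rfl⟩, rfl⟩
        · exact ⟨w, by simp, _, hcS, .inr ⟨h, rfl⟩, Sym2.eq_swap⟩
        · exact ⟨w, by simp, a i, by simp [haz i, haw i], .inl rfl, rfl⟩
  refine ⟨R, fun i ↦ (hR i).1, fun i e he ↦ ?_,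
    pairwise_disjoint_edges_of_owned_endpoint R _ _ ?_ fun i ↦ (hR i).2⟩
  · obtain ⟨s, hs, v, -, -, rfl⟩ := (hR i).2 e he
    rcases hs with rfl | rfl <;> simp
  · rintro i j v (rfl | ⟨hi, rfl⟩) (hj | ⟨hj, hv⟩)
    · exact ha hj
    · exact absurd ⟨i, hv⟩ (hc ⟨j, hj⟩).2.2
    · exact absurd ⟨j, hj.symm⟩ (hc ⟨i, hi⟩).2.2
    · exact congrArg Subtype.val (c.injective (Subtype.ext hv))

lemma nonempty_embedding_of_ncard_le {s : Set ι} {t : Set V} (hs : s.Finite)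
    (h : s.ncard ≤ t.ncard) : Nonempty (s ↪ t) := by
  by_cases ht : t.Finite
  · have := hs.fintype
    have := ht.fintype
    rw [Set.ncard_eq_toFinset_card', Set.ncard_eq_toFinset_card', Set.toFinset_card,
      Set.toFinset_card] at h
    exact Function.Embedding.nonempty_of_card_le h
  · rw [Set.Infinite.ncard ht, Nat.le_zero, Set.ncard_eq_zero hs] at h
    subst h
    exact ⟨Function.Embedding.ofIsEmpty⟩

lemma ncard_nonadj_le_ncard_common_diff_range [Finite ι] {z w : V} {a : ι → V} (ha : Injective a)
    {i₀ : ι} (hz : G.Adj z (a i₀)) (hw : ¬ G.Adj w (a i₀))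
    (hcommon : Nat.card ι - 1 ≤ (G.neighborSet z ∩ G.neighborSet w).ncard) :
    {i | ¬ G.Adj z (a i)}.ncard ≤ ((G.neighborSet z ∩ G.neighborSet w) \ Set.range a).ncard := by
  set N := G.neighborSet z ∩ G.neighborSet w
  have hindex : {i | ¬ G.Adj z (a i)}.ncard + (a ⁻¹' N).ncard ≤ Nat.card ι - 1 := by
    have hdisj : Disjoint {i | ¬ G.Adj z (a i)} (a ⁻¹' N) :=
      Set.disjoint_left.2 fun i hi hiN ↦ hi hiN.1
    have hsub : {i | ¬ G.Adj z (a i)} ∪ a ⁻¹' N ⊆ {i₀}ᶜ := by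
      rintro i (hi | hi) rfl
      exacts [hi hz, hw hi.2]
    rw [← Set.ncard_union_eq hdisj, ← Set.ncard_singleton i₀, ← Set.ncard_compl]
    exact Set.ncard_le_ncard hsub
  have hN : N.ncard ≤ (N \ Set.range a).ncard + (a ⁻¹' N).ncard := by
    rw [← Set.ncard_image_of_injective _ ha, Set.image_preimage_eq_range_inter,
      ← Set.sdiff_inter_self_eq_sdiff]
    exact Set.ncard_le_ncard_sdiff_add_ncard _ _
  omega

theorem exists_star_paths [Finite ι] {x y : V} {a : ι → V} (hα : Gᶜ.CliqueFree 3) (hxy : x ≠ y)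
    (hnadj : ¬ G.Adj x y) (hcommon : Nat.card ι - 1 ≤ (G.neighborSet x ∩ G.neighborSet y).ncard)
    (ha : Injective a) (hax : ∀ i, a i ≠ x) (hay : ∀ i, a i ≠ y) :
    ∃ z, (z = x ∨ z = y) ∧ ∃ R : ∀ i, G.Walk z (a i), (∀ i, (R i).IsPath) ∧
      (∀ i, ∀ e ∈ (R i).edges, x ∈ e ∨ y ∈ e) ∧
      Pairwise fun i j ↦ (R i).edges.Disjoint (R j).edges := by
  have hcover (i) := adj_or_adj_of_cliqueFree_compl hα hxy hnadj (hax i) (hay i)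
  by_cases hall : ∀ i, G.Adj x (a i)
  · have : IsEmpty {i | ¬ G.Adj x (a i)} := ⟨fun i ↦ i.2 (hall i)⟩
    exact ⟨x, .inl rfl, exists_star_paths_of_embedding ha hax hay hcover
      Function.Embedding.ofIsEmpty⟩
  · obtain ⟨i₀, hi₀⟩ := not_forall.1 hall
    rw [Set.inter_comm] at hcommon
    obtain ⟨c⟩ := nonempty_embedding_of_ncard_le (Set.toFinite _)
      (ncard_nonadj_le_ncard_common_diff_range ha ((hcover i₀).resolve_left hi₀) hi₀ hcommon)
    obtain ⟨R, hR, hRxy, hRR⟩ :=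
      exists_star_paths_of_embedding ha hay hax (fun i ↦ (hcover i).symm) c
    exact ⟨y, .inr rfl, R, hR, fun i e he ↦ (hRxy i e he).symm, hRR⟩

end SimpleGraph

theorem statement_13_general {V : Type*} (G : SimpleGraph V) (n ℓ : ℕ)
    (hα : Gᶜ.CliqueFree 3)
    (x y : V) (hxy : x ≠ y) (hnadj : ¬ G.Adj x y)
    (hcommon : ℓ - 1 ≤ (G.neighborSet x ∩ G.neighborSet y).ncard)
    (himm : Immersion (G.induce ({x, y}ᶜ : Set V))
      (completeBipartiteGraph (Fin ℓ) (Fin ((n + 1) / 2 - 1 - ℓ)))) :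
    Immersion G (completeBipartiteGraph (Fin ℓ) (Fin ((n + 1) / 2 - ℓ))) := by
  obtain ⟨I₀⟩ := immersion_completeBipartiteGraph_iff.1 himm
  let φ := Embedding.induce (G := G) ({x, y}ᶜ : Set V)
  let I := I₀.map φ
  have hφ : ∀ v ∈ Set.range φ, ¬ (v = x ∨ v = y) := by
    rintro _ ⟨⟨v, hv⟩, rfl⟩
    simpa [φ] using hv
  obtain ⟨z, hz, R, hR, hRxy, hRR⟩ := exists_star_paths hα hxy hnadj (by simpa using hcommon)
    I.left_injective (fun i h ↦ hφ _ ⟨_, rfl⟩ (.inl h)) (fun i h ↦ hφ _ ⟨_, rfl⟩ (.inr h))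
  have hzI : z ∉ Set.range (Sum.elim I.left I.right) := by
    rintro ⟨i | j, rfl⟩ <;> exact hφ _ ⟨_, rfl⟩ hz
  have hRI : ∀ i i' j, (R i).edges.Disjoint (I.walk i' j).edges := by
    intro i i' j e he he'
    have hI (v) (hv : v ∈ e) := hφ v (Walk.mem_range_of_mem_support_map φ.toHom
      (Walk.mem_support_of_mem_edges he' hv))
    rcases hRxy i e he with hx | hy
    exacts [hI x hx (.inl rfl), hI y hy (.inr rfl)]
  have hm : (n + 1) / 2 - ℓ ≤ (n + 1) / 2 - 1 - ℓ + 1 := by omega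
  exact ((I.extend z hzI R hR hRR hRI).comapRight
    ((Fin.castLEEmb hm).trans (finSuccEquiv _).toEmbedding)).immersion

/-- Induction step: if `G` is an `n`-vertex graph with independence number at most 2,
`1 ≤ ℓ ≤ ⌈n/2⌉ - 1`, and `x, y` are non-adjacent vertices with at least `ℓ - 1` common
neighbors such that `G - x - y` contains an immersion of `K_{ℓ, ⌈n/2⌉ - 1 - ℓ}`, then `G`
contains an immersion of `K_{ℓ, ⌈n/2⌉ - ℓ}`. -/
theorem statement_13 {V : Type*} [Fintype V] [DecidableEq V] (G : SimpleGraph V) (n ℓ : ℕ)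
    (hn : Fintype.card V = n)
    (hα : Gᶜ.CliqueFree 3)
    (hℓ1 : 1 ≤ ℓ) (hℓ2 : ℓ ≤ (n + 1) / 2 - 1)
    (x y : V) (hxy : x ≠ y) (hnadj : ¬ G.Adj x y)
    (hcommon : ℓ - 1 ≤ (G.neighborSet x ∩ G.neighborSet y).ncard)
    (himm : Immersion (G.induce ({x, y}ᶜ : Set V))
      (completeBipartiteGraph (Fin ℓ) (Fin ((n + 1) / 2 - 1 - ℓ)))) :
    Immersion G (completeBipartiteGraph (Fin ℓ) (Fin ((n + 1) / 2 - ℓ))) :=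
  statement_13_general G n ℓ hα x y hxy hnadj hcommon himm
end
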